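/- arXiv:2510.03754 — 8 statements merged into one kernel-verified Lean document; each statement's English description precedes it below -/
import Mathlib

section
/- Let c be a positive integer and let G be a (not necessarily topological) nilpotent group of nilpotency class at most c. Let x ∈ G be an element such that x^n belongs to the center Z(G) for some positive integer n. Then x commutes with y^{n^{c-1}} for every y ∈ G. -/
/-!
Let `γ j` be the lower central series. By induction on `j`, `⁅x, y ^ n ^ j⁆ ∈ γ (j + 1)`:
if `⁅x, z⁆ ∈ γ (j + 1)` then `⁅x, z⁆` is central modulo `γ (j + 2)`, and whenever `⁅a, b⁆` is
central the commutator is multiplicative in each argument, so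
`⁅x, z ^ n⁆ = ⁅x, z⁆ ^ n = ⁅x ^ n, z⁆ = 1` modulo `γ (j + 2)`.
Taking `j = c - 1` gives `⁅x, y ^ n ^ (c - 1)⁆ ∈ γ c = ⊥`.
-/

open scoped commutatorElement

namespace Subgroup

variable {G : Type*} [Group G]

theorem commutatorElement_pow_left_of_mem_center {a b : G} (h : ⁅a, b⁆ ∈ center G) (k : ℕ) :
    ⁅a ^ k, b⁆ = ⁅a, b⁆ ^ k := by
  induction k with
  | zero => simp
  | succ k ih =>
    rw [pow_succ', commutatorElement_mul_left_eq_conj_mul, ih,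
      mem_center_iff.mp (pow_mem h k) a, mul_inv_cancel_right, pow_succ]

theorem commutatorElement_pow_right_of_mem_center {a b : G} (h : ⁅a, b⁆ ∈ center G) (k : ℕ) :
    ⁅a, b ^ k⁆ = ⁅a, b⁆ ^ k := by
  induction k with
  | zero => simp
  | succ k ih =>
    rw [pow_succ, commutatorElement_mul_right_eq_mul_conj, ih,
      mul_assoc _ (b ^ k), mem_center_iff.mp h (b ^ k), ← mul_assoc,
      mul_inv_cancel_right, pow_succ]

theorem commute_pow_of_commutatorElement_mem_center {a b : G} {n : ℕ}
    (hab : ⁅a, b⁆ ∈ center G) (ha : a ^ n ∈ center G) : Commute a (b ^ n) := by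
  rw [← commutatorElement_eq_one_iff_commute, commutatorElement_pow_right_of_mem_center hab,
    ← commutatorElement_pow_left_of_mem_center hab, commutatorElement_eq_one_iff_commute]
  exact (mem_center_iff.mp ha b).symm

theorem center_le_upperCentralSeriesStep (N : Subgroup G) [N.Normal] :
    center G ≤ upperCentralSeriesStep N := fun x hx y => by
  rw [commutatorElement_eq_one_iff_mul_comm.mpr (mem_center_iff.mp hx y).symm]
  exact N.one_mem

theorem commutatorElement_pow_mem_of_mem_upperCentralSeriesStep (N : Subgroup G) [N.Normal]
    {a b : G} {n : ℕ} (hab : ⁅a, b⁆ ∈ upperCentralSeriesStep N)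
    (ha : a ^ n ∈ upperCentralSeriesStep N) : ⁅a, b ^ n⁆ ∈ N := by
  rw [upperCentralSeriesStep_eq_comap_center, mem_comap, map_commutatorElement] at hab
  rw [upperCentralSeriesStep_eq_comap_center, mem_comap, map_pow] at ha
  rw [← QuotientGroup.eq_one_iff, ← QuotientGroup.mk'_apply, map_commutatorElement, map_pow,
    commutatorElement_eq_one_iff_commute]
  exact commute_pow_of_commutatorElement_mem_center hab ha

theorem commutatorElement_pow_pow_mem_lowerCentralSeries {x : G} {n : ℕ}
    (hx : x ^ n ∈ center G) (y : G) (j : ℕ) :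
    ⁅x, y ^ n ^ j⁆ ∈ (⊤ : Subgroup G).lowerCentralSeries (j + 1) := by
  induction j with
  | zero => exact commutator_mem_commutator (mem_top x) (mem_top _)
  | succ j ih =>
    rw [pow_succ, pow_mul]
    refine commutatorElement_pow_mem_of_mem_upperCentralSeriesStep _ (fun g => ?_)
      (center_le_upperCentralSeriesStep _ hx)
    exact commutator_mem_commutator ih (mem_top g)

end Subgroup

theorem commute_pow_of_pow_mem_center_general {G : Type*} [Group G] {c n : ℕ}
    (hclass : (⊤ : Subgroup G).lowerCentralSeries c = ⊥)
    {x : G} (hx : x ^ n ∈ Subgroup.center G) :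
    ∀ y : G, Commute x (y ^ n ^ (c - 1)) := by
  intro y
  have hmem := Subgroup.commutatorElement_pow_pow_mem_lowerCentralSeries hx y (c - 1)
  have hle : c ≤ c - 1 + 1 := by omega
  rw [← commutatorElement_eq_one_iff_commute, ← Subgroup.mem_bot, ← hclass]
  exact Subgroup.lowerCentralSeries_antitone _ hle hmem

/-- Let `c` be a positive integer and `G` a nilpotent group of class at most `c`
(i.e. the `(c+1)`-st term of the lower central series, `lowerCentralSeries G c`, is
trivial). If `x ^ n` is central for some positive integer `n`, then `x` commutes with
`y ^ (n ^ (c - 1))` for every `y ∈ G`. -/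
theorem commute_pow_of_pow_mem_center {G : Type*} [Group G] {c n : ℕ}
    (hc : 0 < c) (hn : 0 < n)
    (hclass : (⊤ : Subgroup G).lowerCentralSeries c = ⊥)
    {x : G} (hx : x ^ n ∈ Subgroup.center G) :
    ∀ y : G, Commute x (y ^ n ^ (c - 1)) :=
  commute_pow_of_pow_mem_center_general hclass hx
end

section
/- Let G be a nilpotent profinite group (nilpotent as an abstract group, of some finite class). If the quotient G/Z(G) of G by its center is finite-by-procyclic, then G/Z(G) is finite. -/
/-!  Basic notions for profinite groups.

A profinite group is modelled as a compact Hausdorff totally disconnected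
topological group, via the instance assumptions
`[Group G] [TopologicalSpace G] [TopologicalGroup G] [CompactSpace G]
[T2Space G] [TotallyDisconnectedSpace G]`. -/

open scoped commutatorElement

/-- The set of primes dividing the order of some finite continuous quotient of `K`:
`p ∈ primesOf K` iff `p` is prime and divides the (finite) index of some open normal
subgroup of `K`. -/
def primesOf (K : Type*) [Group K] [TopologicalSpace K] : Set ℕ :=
  {p | p.Prime ∧ ∃ N : Subgroup K, N.Normal ∧ IsOpen (N : Set K) ∧ N.index ≠ 0 ∧ p ∣ N.index}

/-- The closed subgroup topologically generated by `x`. -/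
def closedGen {G : Type*} [Group G] [TopologicalSpace G] [IsTopologicalGroup G] (x : G) :
    Subgroup G :=
  (Subgroup.zpowers x).topologicalClosure

/-- `x` and `y` have coprime orders: `π(⟨x⟩) ∩ π(⟨y⟩) = ∅`. -/
def CoprimeOrders {G : Type*} [Group G] [TopologicalSpace G] [IsTopologicalGroup G] (x y : G) :
    Prop :=
  primesOf ↥(closedGen x) ∩ primesOf ↥(closedGen y) = ∅

/-- `g` is a coprime commutator: `g = [x,y]` with `x, y` of coprime orders. -/
def IsCoprimeCommutator {G : Type*} [Group G] [TopologicalSpace G] [IsTopologicalGroup G]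
    (g : G) : Prop :=
  ∃ x y : G, CoprimeOrders x y ∧ g = ⁅x, y⁆

/-- A topological group is procyclic if it is topologically generated by a single element. -/
def IsProcyclic (K : Type*) [Group K] [TopologicalSpace K] : Prop :=
  ∃ g : K, closure ((Subgroup.zpowers g : Subgroup K) : Set K) = Set.univ

/-- A subgroup of a topological group is procyclic if it is topologically generated by a
single element. -/
def IsProcyclicSubgroup {G : Type*} [Group G] [TopologicalSpace G] (H : Subgroup G) : Prop :=
  ∃ g ∈ H, closure ((Subgroup.zpowers g : Subgroup G) : Set G) = (H : Set G)

/-- The pronilpotent residual `γ∞(G)`: the intersection of the terms of the lower central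
series of `G` (each term taken as the corresponding closed subgroup). -/
def pronilpotentResidual (G : Type*) [Group G] [TopologicalSpace G] [IsTopologicalGroup G] :
    Subgroup G :=
  ⨅ n : ℕ, ((⊤ : Subgroup G).lowerCentralSeries n).topologicalClosure

/-- A profinite group is pronilpotent iff its pronilpotent residual is trivial. -/
def IsPronilpotent (K : Type*) [Group K] [TopologicalSpace K] [IsTopologicalGroup K] : Prop :=
  pronilpotentResidual K = ⊥

/-- The quotient `K ⧸ N` is procyclic. -/
def QuotientIsProcyclic {K : Type*} [Group K] [TopologicalSpace K] (N : Subgroup K)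
    (hN : N.Normal) : Prop :=
  letI := hN
  IsProcyclic (K ⧸ N)

/-- `K` is finite-by-procyclic: it has a finite normal subgroup with procyclic quotient. -/
def FiniteByProcyclic (K : Type*) [Group K] [TopologicalSpace K] : Prop :=
  ∃ (N : Subgroup K) (hN : N.Normal), Finite N ∧ QuotientIsProcyclic N hN

/-- The quotient `K ⧸ N` is pronilpotent. -/
def QuotientIsPronilpotent {K : Type*} [Group K] [TopologicalSpace K] [IsTopologicalGroup K]
    (N : Subgroup K) (hN : N.Normal) : Prop :=
  letI := hN
  IsPronilpotent (K ⧸ N)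

/-- The closed subgroup `[S,T]` generated by the commutators `⁅s,t⁆`, `s ∈ S`, `t ∈ T`. -/
def commClosure {G : Type*} [Group G] [TopologicalSpace G] [IsTopologicalGroup G]
    (S T : Set G) : Subgroup G :=
  (Subgroup.closure {z : G | ∃ s ∈ S, ∃ t ∈ T, z = ⁅s, t⁆}).topologicalClosure

/-!
Write `Q = G/Z(G)` and let `N ⊴ Q` be finite with `Q/N` topologically generated by the image
of `q = xZ(G)`. The closure `A` of `⟨x⟩` is abelian, and by compactness it maps onto `Q/N`, so
`G = A·M` with `M` the preimage of `N`; moreover `m ^ E` is central for `m ∈ M`, `E = |N|`.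
Conjugation by `q` is an automorphism of the finite group `N`, so some power `c = x ^ k`
centralises `N` modulo `Z(G)`; it also commutes with `A`, hence `cZ(G)` is central in `Q` and
all commutators `⁅c, g⁆` are central. Then `⁅c ^ E, m⁆ = ⁅c, m⁆ ^ E = ⁅c, m ^ E⁆ = 1` for
`m ∈ M`, so `c ^ E` is central in `G`. Thus `q` has finite order, `⟨q⟩` is closed, and
`Q = ⟨q⟩·N` is finite.
-/

section Commutator

variable {G : Type*} [Group G]

theorem commutatorElement_pow_left_of_commute {c g : G} (h : Commute c ⁅c, g⁆) (n : ℕ) :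
    ⁅c ^ n, g⁆ = ⁅c, g⁆ ^ n := by
  induction n with
  | zero => simp
  | succ n ih =>
    rw [pow_succ', commutatorElement_mul_left_eq_conj_mul, ih, (h.pow_right n).eq,
      mul_inv_cancel_right, pow_succ]

theorem commutatorElement_pow_right_of_commute {c g : G} (h : Commute g ⁅c, g⁆) (n : ℕ) :
    ⁅c, g ^ n⁆ = ⁅c, g⁆ ^ n := by
  rw [← commutatorElement_inv, commutatorElement_pow_left_of_commute
    (by rw [← commutatorElement_inv]; exact h.inv_right), ← commutatorElement_inv, inv_pow,
    inv_inv]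

end Commutator

namespace Subgroup

section Algebraic

variable {G : Type*} [Group G]

theorem centralizer_sup (H K : Subgroup G) :
    centralizer ((H ⊔ K : Subgroup G) : Set G) = centralizer H ⊓ centralizer K := by
  rw [sup_eq_closure, centralizer_closure]
  ext g
  simp [mem_centralizer_iff, or_imp, forall_and]

theorem mem_center_of_sup_eq_top {H K : Subgroup G} (hHK : H ⊔ K = ⊤) {g : G}
    (hH : g ∈ centralizer H) (hK : g ∈ centralizer K) : g ∈ center G := by
  rw [← centralizer_univ, ← coe_top, ← hHK, centralizer_sup]
  exact ⟨hH, hK⟩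

theorem pow_card_mulAut_mem_centralizer (N : Subgroup G) [N.Normal] [Finite N] (g : G) :
    g ^ Nat.card (MulAut N) ∈ centralizer N := by
  have hg : MulAut.conjNormal (H := N) (g ^ Nat.card (MulAut N)) = 1 := by
    rw [map_pow, pow_card_eq_one']
  refine mem_centralizer_iff.mpr fun n hn => ?_
  have := congrArg Subtype.val (DFunLike.congr_fun hg ⟨n, hn⟩)
  rw [MulAut.conjNormal_apply, MulAut.one_apply] at this
  exact (mul_inv_eq_iff_eq_mul.mp this).symm

theorem commutatorElement_mem_center_of_mk_mem_center {c : G}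
    (hc : (c : G ⧸ center G) ∈ center (G ⧸ center G)) (g : G) : ⁅c, g⁆ ∈ center G := by
  rw [← QuotientGroup.eq_one_iff, ← QuotientGroup.mk'_apply, map_commutatorElement]
  exact commutatorElement_eq_one_iff_mul_comm.mpr (mem_center_iff.mp hc _).symm

theorem pow_mem_center_of_sup_eq_top {A M : Subgroup G} (hAM : A ⊔ M = ⊤) {E : ℕ}
    (hM : ∀ m ∈ M, m ^ E ∈ center G) {c : G} (hcA : c ∈ centralizer A)
    (hcM : ∀ m ∈ M, ⁅c, m⁆ ∈ center G) : c ^ E ∈ center G := by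
  refine mem_center_of_sup_eq_top hAM (pow_mem hcA E) ?_
  rw [mem_centralizer_iff_commutator_eq_one']
  intro m hm
  have hcm := mem_center_iff.mp (hcM m hm)
  rw [commutatorElement_pow_left_of_commute (hcm c),
    ← commutatorElement_pow_right_of_commute (hcm m)]
  exact Commute.commutator_eq (mem_center_iff.mp (hM m hm) c)

theorem mk_pow_eq_one_of_sup_eq_top {A : Subgroup G} [IsMulCommutative A]
    {N : Subgroup (G ⧸ center G)} [N.Normal] [Finite N]
    (hA : A ⊔ N.comap (QuotientGroup.mk' (center G)) = ⊤) {a : G} (ha : a ∈ A) :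
    (a : G ⧸ center G) ^ (Nat.card (MulAut N) * Nat.card N) = 1 := by
  set π := QuotientGroup.mk' (center G)
  have hπ : Function.Surjective π := QuotientGroup.mk'_surjective _
  have hAN : A.map π ⊔ N = ⊤ := by
    rw [← map_comap_eq_self_of_surjective hπ N, ← map_sup, hA, map_top_of_surjective π hπ]
  have hcA : a ^ Nat.card (MulAut N) ∈ centralizer A := pow_mem (le_centralizer A ha) _
  have hc : π (a ^ Nat.card (MulAut N)) ∈ center (G ⧸ center G) := by
    refine mem_center_of_sup_eq_top hAN ?_ ?_
    · rw [coe_map]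
      exact map_centralizer_le_centralizer_image _ π (mem_map_of_mem π hcA)
    · rw [map_pow]
      exact pow_card_mulAut_mem_centralizer N _
  have hM : ∀ m ∈ N.comap π, m ^ Nat.card N ∈ center G := fun m hm => by
    rw [← QuotientGroup.eq_one_iff, ← QuotientGroup.mk'_apply, map_pow]
    exact congrArg Subtype.val (pow_card_eq_one' (G := N) (x := ⟨π m, hm⟩))
  have := pow_mem_center_of_sup_eq_top hA hM hcA
    fun m _ => commutatorElement_mem_center_of_mk_mem_center hc m
  rw [← QuotientGroup.eq_one_iff] at this
  rwa [pow_mul]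

end Algebraic

section Topological

variable {G : Type*} [Group G] [TopologicalSpace G] [IsTopologicalGroup G]

instance [T2Space G] : IsClosed ((center G : Subgroup G) : Set G) := by
  rw [coe_center, ← Set.centralizer_univ]
  exact Set.isClosed_centralizer _

instance [T2Space G] (H : Subgroup G) [IsMulCommutative H] :
    IsMulCommutative H.topologicalClosure :=
  letI := H.commGroupTopologicalClosure fun a b => Std.Commutative.comm a b
  ⟨⟨mul_comm⟩⟩

theorem map_topologicalClosure_zpowers_eq_top [CompactSpace G] {H : Type*} [Group H]
    [TopologicalSpace H] [T2Space H] {f : G →* H} (hf : Continuous f) {x : G}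
    (hx : _root_.closure ((zpowers (f x) : Subgroup H) : Set H) = Set.univ) :
    (zpowers x).topologicalClosure.map f = ⊤ := by
  rw [← coe_eq_univ, coe_map, topologicalClosure_coe,
    image_closure_of_isCompact isClosed_closure.isCompact hf.continuousOn, ← coe_map,
    MonoidHom.map_zpowers, hx]

end Topological

end Subgroup

theorem finite_of_closure_zpowers_eq_univ {K : Type*} [Group K] [TopologicalSpace K] [T1Space K]
    {g : K} (hg : closure ((Subgroup.zpowers g : Subgroup K) : Set K) = Set.univ)
    (hfin : IsOfFinOrder g) : Finite K := by
  have hfin' := finite_zpowers.mpr hfin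
  rw [← Set.finite_univ_iff, ← hg, hfin'.isClosed.closure_eq]
  exact hfin'

theorem quotient_center_finite_of_finiteByProcyclic_general
    {G : Type*} [Group G] [TopologicalSpace G] [IsTopologicalGroup G]
    [CompactSpace G] [T2Space G]
    (h : FiniteByProcyclic (G ⧸ Subgroup.center G)) :
    Finite (G ⧸ Subgroup.center G) := by
  obtain ⟨N, hN, hNfin, g, hg⟩ := h
  have : IsClosed (N : Set (G ⧸ Subgroup.center G)) := (Set.toFinite _).isClosed
  set π := QuotientGroup.mk' (Subgroup.center G)
  set θ := QuotientGroup.mk' N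
  obtain ⟨x, rfl⟩ : ∃ x, θ (π x) = g :=
    ((QuotientGroup.mk'_surjective N).comp (QuotientGroup.mk'_surjective _)) g
  have hA : (Subgroup.zpowers x).topologicalClosure ⊔ N.comap π = ⊤ := by
    rw [← QuotientGroup.ker_mk' N, MonoidHom.comap_ker, ← Subgroup.comap_map_eq,
      Subgroup.map_topologicalClosure_zpowers_eq_top (f := θ.comp π)
        (QuotientGroup.continuous_mk.comp QuotientGroup.continuous_mk) hg,
      Subgroup.comap_top]
  have hx : IsOfFinOrder (π x) := isOfFinOrder_iff_pow_eq_one.mpr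
    ⟨_, Nat.mul_pos Nat.card_pos Nat.card_pos, Subgroup.mk_pow_eq_one_of_sup_eq_top hA
      (subset_closure (Subgroup.mem_zpowers x))⟩
  have : Finite (_ ⧸ N) := finite_of_closure_zpowers_eq_univ hg (θ.isOfFinOrder hx)
  exact (finite_iff_subgroup_quotient N).mpr ⟨hNfin, this⟩

/-- Let `G` be a nilpotent profinite group. If `G/Z(G)` is finite-by-procyclic,
then `G/Z(G)` is finite. -/
theorem quotient_center_finite_of_finiteByProcyclic
    {G : Type*} [Group G] [TopologicalSpace G] [IsTopologicalGroup G]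
    [CompactSpace G] [T2Space G] [TotallyDisconnectedSpace G]
    [Group.IsNilpotent G]
    (h : FiniteByProcyclic (G ⧸ Subgroup.center G)) :
    Finite (G ⧸ Subgroup.center G) :=
  quotient_center_finite_of_finiteByProcyclic_general h
end

section
/- Let G be a finite-by-procyclic profinite group. Then G has a finite characteristic subgroup N (a finite subgroup invariant under all automorphisms of G) such that G/N is procyclic. -/
/-!  Basic notions for profinite groups.

A profinite group is modelled as a compact Hausdorff totally disconnected
topological group, via the instance assumptions
`[Group G] [TopologicalSpace G] [TopologicalGroup G] [CompactSpace G]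
[T2Space G] [TotallyDisconnectedSpace G]`. -/

open scoped commutatorElement

/-! If `N` is a finite normal subgroup of order `n` with `G/N` procyclic, take for `M` the
subgroup generated by all `x` with `x ^ n = 1`. It is characteristic, and contains `N` by Lagrange,
so `G/M` is a quotient of `G/N` and hence procyclic. Every finite continuous quotient of `G/N` is
cyclic, so `G/N` has at most `n` elements of order dividing `n`; since `G/N` is abelian they form a
subgroup, and its preimage in `G` is a finite subgroup containing `M`. -/

open QuotientGroup

section Profinite

variable {G : Type*} [Group G] [TopologicalSpace G] [IsTopologicalGroup G] [CompactSpace G]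
  [TotallyDisconnectedSpace G]

theorem QuotientGroup.totallyDisconnectedSpace_of_isClosed (N : Subgroup G) [N.Normal]
    (hN : IsClosed (N : Set G)) : TotallyDisconnectedSpace (G ⧸ N) := by
  rw [totallyDisconnectedSpace_iff_connectedComponent_one]
  refine Set.eq_singleton_iff_unique_mem.mpr ⟨mem_connectedComponent, fun x hx => ?_⟩
  obtain ⟨g, rfl⟩ := mk_surjective x
  by_contra hg1
  have hgN : g ∉ N := fun h => hg1 ((eq_one_iff g).mpr h)
  obtain ⟨V, ⟨hVopen, hNV⟩, hgV⟩ :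
      ∃ V : Subgroup G, (IsOpen (V : Set G) ∧ N ≤ V) ∧ g ∉ V := by
    have hN' : N = _ := ProfiniteGrp.closedSubgroup_eq_sInf_open ⟨N, hN⟩
    rw [hN', Subgroup.mem_sInf] at hgN
    push Not at hgN
    exact hgN
  let W : OpenSubgroup (G ⧸ N) := ⟨V.map (mk' N), isOpenMap_coe _ hVopen⟩
  have hgW : (g : G ⧸ N) ∉ W := by
    rintro ⟨v, hv, hvg⟩
    have : v⁻¹ * g ∈ N := QuotientGroup.eq.mp hvg
    exact hgV (by simpa using V.mul_mem hv (hNV this))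
  exact hgW (W.isClopen.connectedComponent_subset W.one_mem hx)

theorem exists_openNormalSubgroup_injOn_mk {t : Set G} (ht : t.Finite) :
    ∃ U : OpenNormalSubgroup G, Set.InjOn ((↑) : G → G ⧸ (U : Subgroup G)) t := by
  set D := (fun p : G × G => p.1⁻¹ * p.2) '' (t ×ˢ t \ Set.diagonal G)
  have hD : IsOpen Dᶜ := ((ht.prod ht).sdiff.image _).isClosed.isOpen_compl
  have h1D : (1 : G) ∈ Dᶜ := by
    rintro ⟨⟨a, b⟩, ⟨-, hab⟩, h⟩
    exact hab (inv_mul_eq_one.mp h)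
  obtain ⟨U, hU⟩ := ProfiniteGrp.exist_openNormalSubgroup_sub_open_nhds_of_one hD h1D
  refine ⟨U, fun a ha b hb hab => by_contra fun hne => ?_⟩
  exact hU (QuotientGroup.eq.mp hab) ⟨(a, b), ⟨⟨ha, hb⟩, hne⟩, rfl⟩

theorem encard_le_of_forall_encard_image_mk_le {S : Set G} {B : ℕ}
    (h : ∀ U : OpenNormalSubgroup G, (((↑) : G → G ⧸ (U : Subgroup G)) '' S).encard ≤ B) :
    S.encard ≤ B := by
  by_contra! hB
  obtain ⟨t, htS, htB⟩ := Set.exists_subset_encard_eq (Order.add_one_le_of_lt hB)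
  obtain ⟨U, hU⟩ := exists_openNormalSubgroup_injOn_mk (Set.finite_of_encard_eq_coe htB)
  have : ((B + 1 : ℕ) : ℕ∞) ≤ B :=
    calc ((B + 1 : ℕ) : ℕ∞) = t.encard := by rw [htB]; push_cast; rfl
      _ = (((↑) : G → G ⧸ (U : Subgroup G)) '' t).encard := hU.encard_image.symm
      _ ≤ _ := Set.encard_le_encard (Set.image_mono htS)
      _ ≤ B := h U
  have : B + 1 ≤ B := by exact_mod_cast this
  omega

end Profinite

section Procyclic

variable {K L : Type*} [Group K] [TopologicalSpace K] [Group L] [TopologicalSpace L]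

theorem IsProcyclic.of_surjective (hK : IsProcyclic K) {f : K →* L} (hf : Continuous f)
    (hsurj : Function.Surjective f) : IsProcyclic L := by
  obtain ⟨g, hg⟩ := hK
  refine ⟨f g, Set.eq_univ_of_univ_subset ?_⟩
  calc Set.univ = f '' closure (Subgroup.zpowers g) := by
        rw [hg, Set.image_univ_of_surjective hsurj]
    _ ⊆ closure (f '' Subgroup.zpowers g) := image_closure_subset_closure_image hf
    _ = closure (Subgroup.zpowers (f g)) := by rw [← MonoidHom.map_zpowers]; rfl

theorem IsProcyclic.isCyclic [DiscreteTopology K] (hK : IsProcyclic K) : IsCyclic K := by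
  obtain ⟨g, hg⟩ := hK
  rw [closure_discrete] at hg
  refine ⟨g, fun x => Subgroup.mem_zpowers_iff.mp ?_⟩
  exact (hg.symm ▸ Set.mem_univ x : x ∈ (Subgroup.zpowers g : Set K))

theorem IsProcyclic.commute [IsTopologicalGroup K] [T2Space K] (hK : IsProcyclic K) (a b : K) :
    Commute a b := by
  obtain ⟨g, hg⟩ := hK
  have hdense : Dense (Subgroup.zpowers g : Set K) := dense_iff_closure_eq.mpr hg
  have : (fun p : K × K => p.1 * p.2) = fun p => p.2 * p.1 :=
    Continuous.ext_on (hdense.prod hdense) (by fun_prop) (by fun_prop) (by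
      rintro ⟨_, _⟩ ⟨⟨i, rfl⟩, ⟨j, rfl⟩⟩
      exact (Commute.zpow_zpow_self g i j).eq)
  exact congrFun this (a, b)

theorem IsProcyclic.encard_setOf_pow_eq_one_le [IsTopologicalGroup K] [CompactSpace K]
    [TotallyDisconnectedSpace K] (hK : IsProcyclic K) {n : ℕ} (hn : 0 < n) :
    {x : K | x ^ n = 1}.encard ≤ n := by
  classical
  refine encard_le_of_forall_encard_image_mk_le fun U => ?_
  have : IsCyclic (K ⧸ (U : Subgroup K)) :=
    (hK.of_surjective (f := mk' (U : Subgroup K)) continuous_mk mk_surjective).isCyclic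
  have : Fintype (K ⧸ (U : Subgroup K)) := Fintype.ofFinite _
  let T := Finset.univ.filter fun y : K ⧸ (U : Subgroup K) => y ^ n = 1
  calc _ ≤ (T : Set (K ⧸ (U : Subgroup K))).encard := by
        refine Set.encard_le_encard ?_
        rintro _ ⟨x, hx, rfl⟩
        simp [T, ← mk_pow, Set.mem_ofPred_eq.mp hx]
    _ ≤ n := by
        rw [Set.encard_coe_eq_coe_finsetCard]
        exact_mod_cast IsCyclic.card_pow_eq_one_le (α := K ⧸ (U : Subgroup K)) hn

theorem IsProcyclic.quotient_of_le {G : Type*} [Group G] [TopologicalSpace G] {N M : Subgroup G}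
    [N.Normal] [M.Normal] (hN : IsProcyclic (G ⧸ N)) (hNM : N ≤ M) : IsProcyclic (G ⧸ M) := by
  refine hN.of_surjective (f := QuotientGroup.map N M (MonoidHom.id G) hNM)
    (continuous_quot_lift _ continuous_mk) fun y => ?_
  obtain ⟨x, rfl⟩ := mk_surjective y
  exact ⟨x, rfl⟩

end Procyclic

theorem Subgroup.characteristic_closure_setOf_pow_eq_one (G : Type*) [Group G] (n : ℕ) :
    (Subgroup.closure {x : G | x ^ n = 1}).Characteristic := by
  refine Subgroup.characteristic_iff_map_le.mpr fun φ => ?_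
  rw [MonoidHom.map_closure]
  refine Subgroup.closure_mono ?_
  rintro _ ⟨x, hx, rfl⟩
  simp [← map_pow, Set.mem_ofPred_eq.mp hx]

theorem map_pow_eq_one_of_mem_closure_setOf_pow_eq_one {G H : Type*} [Group G] [Group H]
    (hH : ∀ a b : H, Commute a b) (f : G →* H) {n : ℕ} {y : G}
    (hy : y ∈ Subgroup.closure {x : G | x ^ n = 1}) : f y ^ n = 1 := by
  induction hy using Subgroup.closure_induction with
  | mem x hx => rw [← map_pow, Set.mem_ofPred_eq.mp hx, map_one]
  | one => rw [map_one, one_pow]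
  | mul x y _ _ hx hy => rw [map_mul, (hH _ _).mul_pow, hx, hy, one_mul]
  | inv x _ hx => rw [map_inv, inv_pow, hx, inv_one]

theorem QuotientGroup.finite_preimage_mk {G : Type*} [Group G] {N : Subgroup G} [N.Normal]
    [Finite N] {T : Set (G ⧸ N)} (hT : T.Finite) : (((↑) : G → G ⧸ N) ⁻¹' T).Finite := by
  refine hT.preimage' fun b _ => ?_
  obtain ⟨x, rfl⟩ := mk_surjective b
  rw [← Set.image_singleton, preimage_image_mk_eq_mul]
  exact (Set.finite_singleton x).mul (Set.toFinite _)

theorem exists_finite_characteristic_with_procyclic_quotient_general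
    {G : Type*} [Group G] [TopologicalSpace G] [IsTopologicalGroup G]
    [CompactSpace G] [TotallyDisconnectedSpace G]
    (h : FiniteByProcyclic G) :
    ∃ (N : Subgroup G), N.Characteristic ∧ Finite N ∧
      ∃ hN : N.Normal, QuotientIsProcyclic N hN := by
  obtain ⟨N, hN, hNfin, hproc⟩ := h
  set n := Nat.card N
  set M := Subgroup.closure {x : G | x ^ n = 1}
  have hMchar : M.Characteristic := Subgroup.characteristic_closure_setOf_pow_eq_one G n
  have hNM : N ≤ M := fun x hx =>
    Subgroup.subset_closure (congrArg Subtype.val (pow_card_eq_one' (G := N) (x := ⟨x, hx⟩)))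
  -- with `N` closed, `G ⧸ N` is Hausdorff by `QuotientGroup.instT3Space`
  have : IsClosed (N : Set G) := (Set.toFinite _).isClosed
  have : TotallyDisconnectedSpace (G ⧸ N) := totallyDisconnectedSpace_of_isClosed N this
  have hT : {y : G ⧸ N | y ^ n = 1}.Finite :=
    Set.finite_of_encard_le_coe (hproc.encard_setOf_pow_eq_one_le Nat.card_pos)
  have hMT : (M : Set G) ⊆ (↑) ⁻¹' {y : G ⧸ N | y ^ n = 1} := fun _ hx =>
    map_pow_eq_one_of_mem_closure_setOf_pow_eq_one hproc.commute (mk' N) hx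
  exact ⟨M, hMchar, ((finite_preimage_mk hT).subset hMT).to_subtype, inferInstance,
    hproc.quotient_of_le hNM⟩

/-- A finite-by-procyclic profinite group has a finite characteristic subgroup `N`
such that `G/N` is procyclic. -/
theorem exists_finite_characteristic_with_procyclic_quotient
    {G : Type*} [Group G] [TopologicalSpace G] [IsTopologicalGroup G]
    [CompactSpace G] [T2Space G] [TotallyDisconnectedSpace G]
    (h : FiniteByProcyclic G) :
    ∃ (N : Subgroup G), N.Characteristic ∧ Finite N ∧
      ∃ hN : N.Normal, QuotientIsProcyclic N hN :=
  exists_finite_characteristic_with_procyclic_quotient_general h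
end

section
/- Let G be a profinite group. Then the centralizer C_G(γ∞(G)) of the pronilpotent residual of G is contained in the Fitting subgroup F(G) of G. -/
open scoped commutatorElement

/-- The Fitting subgroup of a profinite group: the maximal pronilpotent closed normal
subgroup, realised as the closure of the join of all closed normal pronilpotent
subgroups. -/
def FittingSubgroup (G : Type*) [Group G] [TopologicalSpace G] [IsTopologicalGroup G] :
    Subgroup G :=
  (sSup {H : Subgroup G | IsClosed (H : Set G) ∧ H.Normal ∧ IsPronilpotent ↥H}).topologicalClosure

/-!
The centralizer `C` of `R = γ∞(G)` is closed and normal, and `γ∞(C) ≤ R` is centralized by `C`,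
so it is central in `C`. A profinite group `K` whose residual `γ∞(K)` is central is pronilpotent:
in a finite quotient `K/N` the lower central series stabilises at some `D`, which by compactness
is the image of `γ∞(K)`; thus `D` is central, so `D = [D, K/N] = 1`, and `γ∞(K)` lies in every
open normal subgroup.
-/

open Subgroup

section LowerCentralSeries

variable {G H : Type*} [Group G] [Group H]

theorem map_lowerCentralSeries_top_le (f : G →* H) (n : ℕ) :
    ((⊤ : Subgroup G).lowerCentralSeries n).map f ≤ (⊤ : Subgroup H).lowerCentralSeries n := by
  rw [map_lowerCentralSeries]
  exact Subgroup.lowerCentralSeries_mono n le_top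

theorem map_lowerCentralSeries_top_of_surjective {f : G →* H} (hf : Function.Surjective f)
    (n : ℕ) :
    ((⊤ : Subgroup G).lowerCentralSeries n).map f = (⊤ : Subgroup H).lowerCentralSeries n := by
  rw [map_lowerCentralSeries, map_top_of_surjective f hf]

theorem map_center_le_center_of_surjective {f : G →* H} (hf : Function.Surjective f) :
    (center G).map f ≤ center H := by
  rintro _ ⟨z, hz, rfl⟩
  refine mem_center_iff.2 fun h => ?_
  obtain ⟨g, rfl⟩ := hf h
  rw [← map_mul, ← map_mul, mem_center_iff.1 hz g]

theorem iInf_lowerCentralSeries_eq_bot_of_le_center [Finite G]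
    (h : ⨅ n, (⊤ : Subgroup G).lowerCentralSeries n ≤ center G) :
    ⨅ n, (⊤ : Subgroup G).lowerCentralSeries n = ⊥ := by
  have hanti := Subgroup.lowerCentralSeries_antitone (⊤ : Subgroup G)
  obtain ⟨c, hc⟩ := WellFoundedLT.antitone_chain_condition hanti
  have hstable :
      ⨅ n, (⊤ : Subgroup G).lowerCentralSeries n = (⊤ : Subgroup G).lowerCentralSeries c :=
    le_antisymm (iInf_le _ c) <| le_iInf fun n =>
      (le_total c n).elim (fun hcn => (hc n hcn).le) (fun hnc => hanti hnc)
  rw [hstable] at h ⊢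
  rw [hc (c + 1) c.le_succ]
  exact Subgroup.lowerCentralSeries_succ_eq_bot ⊤ h

end LowerCentralSeries

section PronilpotentResidual

variable {K Q : Type*} [Group K] [TopologicalSpace K] [IsTopologicalGroup K]
  [Group Q] [TopologicalSpace Q] [IsTopologicalGroup Q]

instance pronilpotentResidual_normal : (pronilpotentResidual K).Normal :=
  normal_iInf_normal fun _ => is_normal_topologicalClosure _

theorem pronilpotentResidual_eq_iInf_lowerCentralSeries [DiscreteTopology Q] :
    pronilpotentResidual Q = ⨅ n, (⊤ : Subgroup Q).lowerCentralSeries n :=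
  iInf_congr fun _ => SetLike.ext' (isClosed_discrete _).closure_eq

theorem map_pronilpotentResidual_le {f : K →* Q} (hf : Continuous f) :
    (pronilpotentResidual K).map f ≤ pronilpotentResidual Q := by
  rintro _ ⟨x, hx, rfl⟩
  exact mem_iInf.2 fun n => map_mem_closure hf (mem_iInf.1 hx n)
    fun y hy => map_lowerCentralSeries_top_le f n (mem_map_of_mem f hy)

theorem map_pronilpotentResidual_of_surjective [CompactSpace K] [T2Space Q] {f : K →* Q}
    (hf : Continuous f) (hsurj : Function.Surjective f) :
    (pronilpotentResidual K).map f = pronilpotentResidual Q := by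
  refine le_antisymm (map_pronilpotentResidual_le hf) fun q hq => ?_
  set T : ℕ → Set K :=
    fun n => f ⁻¹' {q} ∩ ((⊤ : Subgroup K).lowerCentralSeries n).topologicalClosure
  have hT_closed (n : ℕ) : IsClosed (T n) :=
    (isClosed_singleton.preimage hf).inter (isClosed_topologicalClosure _)
  have hT_succ (n : ℕ) : T (n + 1) ⊆ T n :=
    Set.inter_subset_inter_right _ <| topologicalClosure_mono <|
      Subgroup.lowerCentralSeries_antitone _ n.le_succ
  -- The image of the closure is compact, hence closed, so it contains the closure of the image.
  have hT_nonempty (n : ℕ) : (T n).Nonempty := by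
    have hclosed : IsClosed
        ((((⊤ : Subgroup K).lowerCentralSeries n).topologicalClosure.map f : Subgroup Q) : Set Q) :=
      ((isClosed_topologicalClosure _).isCompact.image hf).isClosed
    have hsub : (⊤ : Subgroup Q).lowerCentralSeries n ≤
        ((⊤ : Subgroup K).lowerCentralSeries n).topologicalClosure.map f := by
      rw [← map_lowerCentralSeries_top_of_surjective hsurj n]
      exact map_mono (le_topologicalClosure _)
    obtain ⟨k, hk, hkq⟩ := topologicalClosure_minimal _ hsub hclosed (mem_iInf.1 hq n)
    exact ⟨k, hkq, hk⟩
  obtain ⟨k, hk⟩ := IsCompact.nonempty_iInter_of_sequence_nonempty_isCompact_isClosed T hT_succ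
    hT_nonempty (hT_closed 0).isCompact hT_closed
  rw [Set.mem_iInter] at hk
  exact ⟨k, mem_iInf.2 fun n => (hk n).2, (hk 0).1⟩

theorem IsPronilpotent.of_pronilpotentResidual_le_center [CompactSpace K]
    [TotallyDisconnectedSpace K] (h : pronilpotentResidual K ≤ center K) :
    IsPronilpotent K := by
  refine (eq_bot_iff_forall _).2 fun g hg => ?_
  by_contra hg1
  obtain ⟨N, hN⟩ := ProfiniteGrp.exist_openNormalSubgroup_sub_open_nhds_of_one
    isOpen_compl_singleton (Ne.symm hg1)
  have : Finite (K ⧸ N.toSubgroup) := quotient_finite_of_isOpen _ N.isOpen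
  have : DiscreteTopology (K ⧸ N.toSubgroup) := QuotientGroup.discreteTopology N.isOpen
  set φ := QuotientGroup.mk' N.toSubgroup
  have hφ := map_pronilpotentResidual_of_surjective (f := φ) continuous_quotient_mk'
    (QuotientGroup.mk'_surjective _)
  have hbot : pronilpotentResidual (K ⧸ N.toSubgroup) = ⊥ := by
    rw [pronilpotentResidual_eq_iInf_lowerCentralSeries (Q := K ⧸ N.toSubgroup)] at hφ ⊢
    refine iInf_lowerCentralSeries_eq_bot_of_le_center ?_
    rw [← hφ]
    exact (map_mono h).trans (map_center_le_center_of_surjective (QuotientGroup.mk'_surjective _))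
  have hφg : φ g ∈ pronilpotentResidual (K ⧸ N.toSubgroup) := hφ ▸ mem_map_of_mem φ hg
  rw [hbot, mem_bot, QuotientGroup.mk'_apply, QuotientGroup.eq_one_iff] at hφg
  exact hN hφg rfl

end PronilpotentResidual

section Fitting

variable {G : Type*} [Group G] [TopologicalSpace G] [IsTopologicalGroup G]

theorem le_fittingSubgroup {H : Subgroup G} (hH : IsClosed (H : Set G)) [H.Normal]
    (hpro : IsPronilpotent H) : H ≤ FittingSubgroup G :=
  (le_sSup (s := {H : Subgroup G | IsClosed (H : Set G) ∧ H.Normal ∧ IsPronilpotent H})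
    ⟨hH, inferInstance, hpro⟩).trans (le_topologicalClosure _)

theorem isPronilpotent_centralizer_pronilpotentResidual [CompactSpace G]
    [TotallyDisconnectedSpace G] :
    IsPronilpotent (centralizer (pronilpotentResidual G : Set G)) := by
  set C := centralizer (pronilpotentResidual G : Set G)
  have : CompactSpace C := isCompact_iff_compactSpace.1 (Set.isClosed_centralizer _).isCompact
  refine IsPronilpotent.of_pronilpotentResidual_le_center fun x hx => ?_
  have hxG : (x : G) ∈ pronilpotentResidual G :=
    map_pronilpotentResidual_le (f := C.subtype) continuous_subtype_val (mem_map_of_mem _ hx)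
  exact mem_center_iff.2 fun c => Subtype.ext (mem_centralizer_iff.1 c.2 _ hxG).symm

end Fitting

theorem centralizer_residual_le_fitting_general
    {G : Type*} [Group G] [TopologicalSpace G] [IsTopologicalGroup G]
    [CompactSpace G] [TotallyDisconnectedSpace G] :
    Subgroup.centralizer ((pronilpotentResidual G : Subgroup G) : Set G) ≤ FittingSubgroup G :=
  le_fittingSubgroup (Set.isClosed_centralizer _) isPronilpotent_centralizer_pronilpotentResidual

/-- In a profinite group, the centralizer of the pronilpotent residual `γ∞(G)` is
contained in the Fitting subgroup `F(G)`. -/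
theorem centralizer_residual_le_fitting
    {G : Type*} [Group G] [TopologicalSpace G] [IsTopologicalGroup G]
    [CompactSpace G] [T2Space G] [TotallyDisconnectedSpace G] :
    Subgroup.centralizer ((pronilpotentResidual G : Subgroup G) : Set G) ≤ FittingSubgroup G :=
  centralizer_residual_le_fitting_general
end

section
/- Let G be a finite group such that G = PA, where P is a normal p-subgroup and A is a nilpotent p'-subgroup (a nilpotent subgroup of order coprime to p). Assume that for every a ∈ A the subgroup [P,a] generated by the commutators [x,a] with x ∈ P is cyclic. Then every element x of G admits an Engel sink generating a cyclic subgroup: there is a subset E ⊆ G with ⟨E⟩ cyclic such that for every g ∈ G there is a positive integer n(g) with the iterated commutator [g, x, x, …, x] (with n occurrences of x) belonging to E for all n ≥ n(g). -/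
/-!
Write `x = s t` with `s = x ^ (1 - k)` a `p`-element and `t = x ^ k` a `p'`-element. Since
`G ⧸ P` is an image of the nilpotent `A`, Engel iterates of any `g` under `x` land in `P` after
`c = class(G ⧸ P)` steps. Modulo `[P, t]`, which is normalised by `P` and by `x`, the element `t`
centralises `P`, so `x` acts on `P` like `s`, and `⟨s⟩P` is a nilpotent `p`-group: from some point
on the iterates lie in `[P, t]`. Finally, writing `x = u a` with `u ∈ P`, `a ∈ A`, the element `t`
lies in the coset `P aᵏ` of the `p'`-element `aᵏ`, so by a Schur–Zassenhaus type conjugacy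
argument it is conjugate into `⟨aᵏ⟩ ≤ A`, and `[P, t]` is conjugate to the cyclic `[P, h t h⁻¹]`.
-/

/-- The commutator `[a,b] = a⁻¹ b⁻¹ a b`. -/
def pComm {G : Type*} [Group G] (a b : G) : G := a⁻¹ * b⁻¹ * a * b

/-- The iterated ("Engel") commutator `[g, x, x, …, x]` with `n` occurrences of `x`. -/
def engelIter {G : Type*} [Group G] (g x : G) : ℕ → G
  | 0 => g
  | n + 1 => pComm (engelIter g x n) x

open Subgroup
open scoped commutatorElement

section Engel

variable {G H : Type*} [Group G] [Group H]

lemma pComm_eq_commutatorElement (a b : G) : pComm a b = ⁅a⁻¹, b⁻¹⁆ := by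
  simp [pComm, commutatorElement_def]

lemma pComm_eq_one_iff {a b : G} : pComm a b = 1 ↔ Commute a b := by
  rw [pComm_eq_commutatorElement, commutatorElement_eq_one_iff_commute, Commute.inv_inv_iff]

lemma map_pComm {F : Type*} [FunLike F G H] [MonoidHomClass F G H] (f : F) (a b : G) :
    f (pComm a b) = pComm (f a) (f b) := by
  simp [pComm]

lemma map_engelIter {F : Type*} [FunLike F G H] [MonoidHomClass F G H] (f : F) (g x : G) (n : ℕ) :
    f (engelIter g x n) = engelIter (f g) (f x) n := by
  induction n with
  | zero => rfl
  | succ n ih => rw [engelIter, map_pComm, ih, engelIter]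

lemma engelIter_add (g x : G) (m n : ℕ) :
    engelIter g x (m + n) = engelIter (engelIter g x m) x n := by
  induction n with
  | zero => rfl
  | succ n ih => rw [← add_assoc, engelIter, ih, engelIter]

lemma engelIter_mem_lowerCentralSeries (g x : G) (n : ℕ) :
    engelIter g x n ∈ (⊤ : Subgroup G).lowerCentralSeries n := by
  induction n with
  | zero => exact mem_top g
  | succ n ih =>
    rw [engelIter, pComm_eq_commutatorElement, Subgroup.lowerCentralSeries_succ]
    exact commutator_mem_commutator (inv_mem ih) (mem_top _)

lemma engelIter_eq_one_of_nilpotencyClass_le [Group.IsNilpotent G] {n : ℕ}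
    (hn : Group.nilpotencyClass G ≤ n) (g x : G) : engelIter g x n = 1 := by
  simpa [Subgroup.lowerCentralSeries_eq_bot_iff_nilpotencyClass_le.mpr hn] using
    engelIter_mem_lowerCentralSeries g x n

lemma engelIter_mem_of_isNilpotent_quotient {N : Subgroup G} [N.Normal]
    [Group.IsNilpotent (G ⧸ N)] (g x : G) :
    engelIter g x (Group.nilpotencyClass (G ⧸ N)) ∈ N := by
  rw [← QuotientGroup.eq_one_iff, ← QuotientGroup.mk'_apply, map_engelIter]
  exact engelIter_eq_one_of_nilpotencyClass_le le_rfl _ _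

lemma pComm_mem_of_normal {M : Subgroup G} [hM : M.Normal] {v : G} (hv : v ∈ M) (x : G) :
    pComm v x ∈ M := by
  have hconj := hM.conj_mem v hv x⁻¹
  rw [inv_inv] at hconj
  simpa [pComm, mul_assoc] using mul_mem (inv_mem hv) hconj

lemma engelIter_mem_of_normal {M : Subgroup G} [M.Normal] {w : G} (hw : w ∈ M) (x : G) (n : ℕ) :
    engelIter w x n ∈ M := by
  induction n with
  | zero => exact hw
  | succ n ih => exact pComm_mem_of_normal ih x

lemma pComm_mul_right_of_commute {v x c : G} (hvc : Commute v c) (hxc : Commute x c) :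
    pComm v (x * c) = pComm v x := by
  have hc : Commute c (x⁻¹ * v * x) := (hxc.symm.inv_right.mul_right hvc.symm).mul_right hxc.symm
  calc pComm v (x * c) = v⁻¹ * (c⁻¹ * ((x⁻¹ * v * x) * c)) := by simp [pComm, mul_assoc]
    _ = pComm v x := by rw [← hc.eq]; simp [pComm, mul_assoc]

lemma engelIter_mul_eq_of_commute {M : Subgroup G} [M.Normal] {x c : G} (hxc : Commute x c)
    (hc : ∀ v ∈ M, Commute v c) {w : G} (hw : w ∈ M) (n : ℕ) :
    engelIter w (x * c) n = engelIter w x n := by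
  induction n with
  | zero => rfl
  | succ n ih =>
    rw [engelIter, ih, pComm_mul_right_of_commute (hc _ (engelIter_mem_of_normal hw x n)) hxc,
      engelIter]

end Engel

lemma IsPGroup.zpowers_of_pow_eq_one {G : Type*} [Group G] {p : ℕ} {s : G} {e : ℕ}
    (hs : s ^ p ^ e = 1) : IsPGroup p (zpowers s) := by
  rintro ⟨_, j, rfl⟩
  refine ⟨e, Subtype.ext ?_⟩
  simp only [SubgroupClass.coe_pow, OneMemClass.coe_one]
  rw [← zpow_natCast, ← zpow_mul, mul_comm, zpow_mul, zpow_natCast, hs, one_zpow]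

section PGroup

variable {G : Type*} [Group G] [Finite G] {p : ℕ} [Fact p.Prime]

lemma IsPGroup.exists_engelIter_eq_one {M : Subgroup G} [M.Normal] (hM : IsPGroup p M) {s : G}
    {e : ℕ} (hs : s ^ p ^ e = 1) : ∃ c, ∀ n ≥ c, ∀ w ∈ M, engelIter w s n = 1 := by
  set W := zpowers s ⊔ M
  have : Group.IsNilpotent W :=
    ((IsPGroup.zpowers_of_pow_eq_one hs).to_sup_of_normal_right hM).isNilpotent
  refine ⟨Group.nilpotencyClass W, fun n hn w hw => ?_⟩
  have hsW : s ∈ W := mem_sup_left (mem_zpowers s)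
  have hwW : w ∈ W := mem_sup_right hw
  have h := map_engelIter W.subtype ⟨w, hwW⟩ ⟨s, hsW⟩ n
  rw [engelIter_eq_one_of_nilpotencyClass_le hn, map_one] at h
  exact h.symm

lemma exists_engelIter_mul_mem_of_commute {M K : Subgroup G} [M.Normal] [K.Normal]
    (hM : IsPGroup p M) {s c : G} {e : ℕ} (hs : s ^ p ^ e = 1) (hsc : Commute s c)
    (hc : ∀ v ∈ M, pComm v c ∈ K) {w : G} (hw : w ∈ M) :
    ∃ n₀, ∀ n ≥ n₀, engelIter w (s * c) n ∈ K := by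
  set π := QuotientGroup.mk' K
  have hπM : IsPGroup p (M.map π) := hM.map π
  have : (M.map π).Normal := Normal.map ‹_› π (QuotientGroup.mk'_surjective K)
  obtain ⟨n₀, hn₀⟩ := hπM.exists_engelIter_eq_one (s := π s) (by rw [← map_pow, hs, map_one])
  have hπc : ∀ v ∈ M.map π, Commute v (π c) := by
    rintro _ ⟨v, hv, rfl⟩
    rw [← pComm_eq_one_iff, ← map_pComm]
    exact (QuotientGroup.eq_one_iff _).mpr (hc v hv)
  refine ⟨n₀, fun n hn => ?_⟩
  rw [← QuotientGroup.eq_one_iff, ← QuotientGroup.mk'_apply, map_engelIter, map_mul,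
    engelIter_mul_eq_of_commute (hsc.map π) hπc (mem_map_of_mem π hw)]
  exact hn₀ n hn _ (mem_map_of_mem π hw)

end PGroup

/-- The subgroup `[P, a]`. -/
def pCommSubgroup {G : Type*} [Group G] (P : Subgroup G) (a : G) : Subgroup G :=
  closure {z | ∃ u ∈ P, z = pComm u a}

section PCommSubgroup

variable {G : Type*} [Group G] (P : Subgroup G)

lemma pComm_mem_pCommSubgroup {u : G} (hu : u ∈ P) (a : G) : pComm u a ∈ pCommSubgroup P a :=
  subset_closure ⟨u, hu, rfl⟩

lemma le_normalizer_pCommSubgroup (a : G) : P ≤ normalizer (pCommSubgroup P a : Set G) := by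
  refine le_normalizer_closure_iff.mpr ?_
  rintro u hu _ ⟨v, hv, rfl⟩
  have hconj : u * pComm v a * u⁻¹ = pComm (v * u⁻¹) a * (pComm u⁻¹ a)⁻¹ := by
    simp only [pComm]; group
  rw [hconj]
  exact mul_mem (pComm_mem_pCommSubgroup P (mul_mem hv (inv_mem hu)) a)
    (inv_mem (pComm_mem_pCommSubgroup P (inv_mem hu) a))

variable [hP : P.Normal]

lemma centralizer_le_normalizer_pCommSubgroup (a : G) :
    centralizer {a} ≤ normalizer (pCommSubgroup P a : Set G) := by
  refine le_normalizer_closure_iff.mpr ?_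
  rintro g hg _ ⟨v, hv, rfl⟩
  have hga : MulAut.conj g a = a := by
    rw [MulAut.conj_apply, mem_centralizer_singleton_iff.mp hg, mul_inv_cancel_right]
  rw [← MulAut.conj_apply, map_pComm, hga]
  exact pComm_mem_pCommSubgroup P (hP.conj_mem v hv g) a

lemma map_conj_pCommSubgroup (g a : G) :
    (pCommSubgroup P a).map (MulAut.conj g).toMonoidHom = pCommSubgroup P (g * a * g⁻¹) := by
  rw [pCommSubgroup, MonoidHom.map_closure, pCommSubgroup]
  congr 1
  ext z
  constructor
  · rintro ⟨_, ⟨v, hv, rfl⟩, rfl⟩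
    exact ⟨g * v * g⁻¹, hP.conj_mem v hv g, map_pComm (MulAut.conj g) v a⟩
  · rintro ⟨v, hv, rfl⟩
    refine ⟨pComm (g⁻¹ * v * g) a, ⟨_, by simpa using hP.conj_mem v hv g⁻¹, rfl⟩, ?_⟩
    simp [map_pComm, mul_assoc]

lemma isCyclic_pCommSubgroup_conj (g a : G) [IsCyclic (pCommSubgroup P a)] :
    IsCyclic (pCommSubgroup P (g * a * g⁻¹)) := by
  rw [← map_conj_pCommSubgroup]
  exact isCyclic_of_surjective _ (MonoidHom.subgroupMap_surjective _ _)

/-- Work in `normalizer [P, t] ⧸ [P, t]`, where `t` centralises `P`. -/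
lemma exists_engelIter_mul_mem_pCommSubgroup [Finite G] {p : ℕ} [Fact p.Prime]
    (hPp : IsPGroup p P) {s t : G} {e : ℕ} (hs : s ^ p ^ e = 1) (hst : Commute s t) {w : G}
    (hw : w ∈ P) : ∃ n₀, ∀ n ≥ n₀, engelIter w (s * t) n ∈ pCommSubgroup P t := by
  set K := pCommSubgroup P t
  set N := normalizer (K : Set G)
  have hsN : s ∈ N := centralizer_le_normalizer_pCommSubgroup P t
    (mem_centralizer_singleton_iff.mpr hst.eq)
  have htN : t ∈ N := centralizer_le_normalizer_pCommSubgroup P t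
    (mem_centralizer_singleton_iff.mpr rfl)
  have hwN : w ∈ N := le_normalizer_pCommSubgroup P t hw
  obtain ⟨n₀, hn₀⟩ := exists_engelIter_mul_mem_of_commute (M := P.subgroupOf N)
    (K := K.subgroupOf N) hPp.comap_subtype (s := ⟨s, hsN⟩) (c := ⟨t, htN⟩)
    (Subtype.ext hs) (Subtype.ext hst.eq)
    (fun v hv => mem_subgroupOf.mpr (pComm_mem_pCommSubgroup P (mem_subgroupOf.mp hv) t))
    (w := ⟨w, hwN⟩) (mem_subgroupOf.mpr hw)
  refine ⟨n₀, fun n hn => ?_⟩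
  have h := mem_subgroupOf.mp (hn₀ n hn)
  rwa [← N.coe_subtype, map_engelIter] at h

end PCommSubgroup

section Conjugacy

variable {G : Type*} [Group G]

lemma zpow_mul_inv_zpow_mem {N : Subgroup G} [N.Normal] {x y : G} (h : x * y⁻¹ ∈ N) (k : ℤ) :
    x ^ k * (y ^ k)⁻¹ ∈ N := by
  rw [← div_eq_mul_inv] at h ⊢
  rw [← QuotientGroup.eq_iff_div_mem] at h ⊢
  rw [QuotientGroup.mk_zpow, QuotientGroup.mk_zpow, h]

open scoped IsMulCommutative in
/-- With `c i = t ^ i * b ^ (-i)`, the `m`-th root of `∏ i < m, c i` conjugates `t` to `b`. -/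
lemma exists_conj_eq_of_mul_inv_mem {S : Subgroup G} [S.Normal] [IsMulCommutative S] {t b : G}
    (htb : t * b⁻¹ ∈ S) {m : ℕ} (ht : t ^ m = 1) (hb : b ^ m = 1)
    (hm : (Nat.card S).Coprime m) : ∃ h : G, h * t * h⁻¹ = b := by
  let w : S := ⟨t * b⁻¹, htb⟩
  let σ : S →* S := (MulAut.conjNormal b).toMonoidHom
  let c : ℕ → S := fun i => ⟨t ^ i * (b ^ i)⁻¹, by simpa using zpow_mul_inv_zpow_mem htb i⟩
  have hσc : ∀ i, σ (c i) = w⁻¹ * c (i + 1) := fun i => by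
    ext
    simp [σ, c, w, pow_succ]
    group
  have hc0 : c 0 = 1 := by ext; simp [c]
  have hcm : c m = 1 := by ext; simp [c, ht, hb]
  set z := ∏ i ∈ Finset.range m, c i
  have hσz : σ z = w⁻¹ ^ m * z := by
    have hshift : ∏ i ∈ Finset.range m, c (i + 1) = z := by
      have h₁ := Finset.prod_range_succ' c m
      rwa [Finset.prod_range_succ, hc0, hcm, mul_one, mul_one, eq_comm] at h₁
    rw [map_prod, Finset.prod_congr rfl (fun i _ => hσc i), Finset.prod_mul_distrib,
      Finset.prod_const, Finset.card_range, hshift]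
  set ζ := (powCoprime hm).symm z
  have hζ : ζ ^ m = z := by rw [← powCoprime_apply hm, Equiv.apply_symm_apply]
  have hσζ : σ ζ = w⁻¹ * ζ := by
    apply (powCoprime hm).injective
    rw [powCoprime_apply, powCoprime_apply, ← map_pow, hζ, hσz, mul_pow, hζ]
  have key : b * ζ * b⁻¹ = (t * b⁻¹)⁻¹ * ζ := congrArg Subtype.val hσζ
  have hcomm : t * ζ = ζ * b := by
    simpa [mul_assoc] using congrArg (fun y => t * b⁻¹ * y * b) key
  refine ⟨(ζ : G)⁻¹, ?_⟩
  rw [inv_inv, mul_assoc, hcomm, inv_mul_cancel_left]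

lemma card_map_lt_of_mem_ker {G' : Type*} [Group G'] (f : G →* G') {H : Subgroup G} [Finite H]
    {z : G} (hzH : z ∈ H) (hz : z ≠ 1) (hfz : f z = 1) : Nat.card (H.map f) < Nat.card H := by
  refine lt_of_le_of_ne (Nat.le_of_dvd Nat.card_pos (card_map_dvd H f)) fun hcard => hz ?_
  have hinj := ((f.subgroupMap_surjective H).bijective_of_nat_card_le hcard.ge).injective
  have h1 : f.subgroupMap H ⟨z, hzH⟩ = f.subgroupMap H 1 := Subtype.ext (by simp [hfz])
  simpa using congrArg Subtype.val (hinj h1)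

/-- Induction on `|P|`: conjugate modulo `Z(P)`, then inside the coset of the abelian `Z(P)`. -/
theorem exists_conj_mem_zpowers_of_mul_inv_mem [Finite G] {p : ℕ} [hp : Fact p.Prime]
    {P : Subgroup G} [P.Normal] (hP : IsPGroup p P) {t b : G} (htb : t * b⁻¹ ∈ P)
    (ht : ¬ p ∣ orderOf t) (hb : ¬ p ∣ orderOf b) : ∃ h : G, h * t * h⁻¹ ∈ zpowers b := by
  induction hn : Nat.card P using Nat.strong_induction_on generalizing G with
  | _ n ih =>
  rcases subsingleton_or_nontrivial P with _ | _
  · have htb1 : t * b⁻¹ = 1 := congrArg Subtype.val (Subsingleton.elim (⟨_, htb⟩ : P) 1)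
    obtain rfl : t = b := mul_inv_eq_one.mp htb1
    exact ⟨1, by simp [mem_zpowers]⟩
  set Z := (center P).map P.subtype
  have := hP.center_nontrivial
  obtain ⟨z, hz⟩ := exists_ne (1 : center P)
  set π := QuotientGroup.mk' Z
  have : (P.map π).Normal := ‹P.Normal›.map π (QuotientGroup.mk'_surjective Z)
  have hlt : Nat.card (P.map π) < n := hn ▸ card_map_lt_of_mem_ker π (z : P).2
    (fun h => hz (Subtype.ext (Subtype.ext h))) ((QuotientGroup.eq_one_iff _).mpr ⟨z, z.2, rfl⟩)
  obtain ⟨h', hh'⟩ := ih _ hlt (hP.map π) (by simpa using mem_map_of_mem π htb)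
    (fun hd => ht (hd.trans (orderOf_map_dvd π t)))
    (fun hd => hb (hd.trans (orderOf_map_dvd π b))) rfl
  obtain ⟨h, rfl⟩ := QuotientGroup.mk'_surjective Z h'
  rw [← map_mul, ← map_inv, ← map_mul, ← MonoidHom.map_zpowers] at hh'
  obtain ⟨b', hb', hπ⟩ := hh'
  have hZ : h * t * h⁻¹ * b'⁻¹ ∈ Z := by
    rw [← div_eq_mul_inv, ← QuotientGroup.eq_iff_div_mem]
    exact hπ.symm
  obtain ⟨k, hk⟩ := IsPGroup.iff_card.mp (hP.to_le (map_subtype_le (center P)) : IsPGroup p Z)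
  have hcop : (Nat.card Z).Coprime (orderOf t * orderOf b) := hk ▸ Nat.Coprime.pow_left k
    (Nat.Coprime.mul_right ((Nat.Prime.coprime_iff_not_dvd hp.out).2 ht)
      ((Nat.Prime.coprime_iff_not_dvd hp.out).2 hb))
  have ht' : (h * t * h⁻¹) ^ (orderOf t * orderOf b) = 1 := by
    rw [← MulAut.conj_apply, ← map_pow, orderOf_dvd_iff_pow_eq_one.mp (dvd_mul_right _ _),
      map_one]
  have hb'' : b' ^ (orderOf t * orderOf b) = 1 := orderOf_dvd_iff_pow_eq_one.mp
    ((orderOf_dvd_of_mem_zpowers hb').trans (dvd_mul_left _ _))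
  obtain ⟨h₂, hh₂⟩ := exists_conj_eq_of_mul_inv_mem hZ ht' hb'' hcop
  refine ⟨h₂ * h, ?_⟩
  rw [show h₂ * h * t * (h₂ * h)⁻¹ = h₂ * (h * t * h⁻¹) * h₂⁻¹ by group, hh₂]
  exact hb'

end Conjugacy

lemma IsOfFinOrder.exists_zpow_coprime_part {G : Type*} [Group G] {x : G} (hx : IsOfFinOrder x)
    {p : ℕ} (hp : p.Prime) :
    ∃ k : ℤ, ¬ p ∣ orderOf (x ^ k) ∧ ∃ e : ℕ, (x ^ (1 - k)) ^ p ^ e = 1 := by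
  set n := orderOf x
  have hn : n ≠ 0 := hx.orderOf_pos.ne'
  set q := p ^ n.factorization p
  set m := n / q
  have hqm : (q : ℤ) * m = n := by exact_mod_cast Nat.ordProj_mul_ordCompl_eq_self n p
  have hbezout := Nat.gcd_eq_gcd_ab q m
  rw [(Nat.Coprime.pow_left _ (Nat.coprime_ordCompl hp hn)).gcd_eq_one, Nat.cast_one] at hbezout
  have hxn : ∀ j : ℤ, x ^ ((n : ℤ) * j) = 1 := fun j => by
    rw [zpow_mul, zpow_natCast, pow_orderOf_eq_one, one_zpow]
  refine ⟨q * q.gcdA m, fun hd => Nat.not_dvd_ordCompl hp hn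
    (hd.trans (orderOf_dvd_of_pow_eq_one ?_)), n.factorization p, ?_⟩
  · rw [← zpow_natCast, ← zpow_mul, ← hxn (q.gcdA m)]
    congr 1
    rw [← hqm]
    ring
  · rw [← zpow_natCast, ← zpow_mul, ← hxn (q.gcdB m)]
    congr 1
    rw [← hqm]
    linear_combination (q : ℤ) * hbezout

lemma isNilpotent_quotient_of_forall_eq_mul {G : Type*} [Group G] {P A : Subgroup G} [P.Normal]
    [Group.IsNilpotent A] (hprod : ∀ g : G, ∃ u ∈ P, ∃ a ∈ A, g = u * a) :
    Group.IsNilpotent (G ⧸ P) := by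
  refine Group.nilpotent_of_surjective ((QuotientGroup.mk' P).comp A.subtype) fun y => ?_
  obtain ⟨g, rfl⟩ := QuotientGroup.mk'_surjective P y
  obtain ⟨u, hu, a, ha, rfl⟩ := hprod g
  exact ⟨⟨a, ha⟩, by simpa [QuotientGroup.eq_iff_div_mem] using inv_mem hu⟩

/-- Let `G` be a finite group with `G = PA`, where `P` is a normal `p`-subgroup and `A` is
a nilpotent `p'`-subgroup. If `[P,a]` is cyclic for every `a ∈ A`, then every element of
`G` admits an Engel sink generating a cyclic subgroup. -/
theorem exists_cyclic_engel_sink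
    {G : Type*} [Group G] [Finite G] {p : ℕ} (hp : p.Prime)
    (P A : Subgroup G) (hPnormal : P.Normal) (hPp : IsPGroup p ↥P)
    (hAnil : Group.IsNilpotent ↥A) (hAp' : ¬ p ∣ Nat.card A)
    (hprod : ∀ g : G, ∃ u ∈ P, ∃ a ∈ A, g = u * a)
    (hcyc : ∀ a ∈ A, IsCyclic ↥(Subgroup.closure {z : G | ∃ u ∈ P, z = pComm u a})) :
    ∀ x : G, ∃ E : Set G, IsCyclic ↥(Subgroup.closure E) ∧
      ∀ g : G, ∃ N : ℕ, 0 < N ∧ ∀ n ≥ N, engelIter g x n ∈ E := by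
  intro x
  have := Fact.mk hp
  obtain ⟨u, hu, a, ha, hxua⟩ := hprod x
  obtain ⟨k, ht, e, hs⟩ := (isOfFinOrder_of_finite x).exists_zpow_coprime_part hp
  have hst : x ^ (1 - k) * x ^ k = x := by rw [← zpow_add, sub_add_cancel, zpow_one]
  have htb : x ^ k * (a ^ k)⁻¹ ∈ P := zpow_mul_inv_zpow_mem (by rwa [hxua, mul_inv_cancel_right]) k
  have hb : ¬ p ∣ orderOf (a ^ k) :=
    fun hd => hAp' (hd.trans (A.orderOf_dvd_natCard (zpow_mem ha k)))
  obtain ⟨h, hh⟩ := exists_conj_mem_zpowers_of_mul_inv_mem hPp htb ht hb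
  have : IsCyclic (pCommSubgroup P (h * x ^ k * h⁻¹)) :=
    hcyc _ (zpowers_le.mpr (zpow_mem ha k) hh)
  have hcyclic := isCyclic_pCommSubgroup_conj P h⁻¹ (h * x ^ k * h⁻¹)
  rw [show h⁻¹ * (h * x ^ k * h⁻¹) * h⁻¹⁻¹ = x ^ k by group] at hcyclic
  have := isNilpotent_quotient_of_forall_eq_mul hprod
  refine ⟨pCommSubgroup P (x ^ k), by rwa [closure_eq], fun g => ?_⟩
  obtain ⟨n₀, hn₀⟩ := exists_engelIter_mul_mem_pCommSubgroup P hPp hs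
    (Commute.zpow_zpow_self x _ _) (engelIter_mem_of_isNilpotent_quotient g x)
  rw [hst] at hn₀
  set c₀ := Group.nilpotencyClass (G ⧸ P)
  refine ⟨c₀ + n₀ + 1, by omega, fun n hn => ?_⟩
  obtain ⟨j, rfl⟩ := Nat.exists_eq_add_of_le (show c₀ ≤ n by omega)
  rw [engelIter_add]
  exact hn₀ j (by omega)
end

section
/- Let A be a profinite group acting continuously by automorphisms on an abelian profinite group M, with A and M of coprime orders (π(A) ∩ π(M) = ∅). If for every a ∈ A the closed subgroup [M,a] is finite, then [M,A] is finite. -/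
open scoped commutatorElement

/-!
Write `[M,a]` for the range of the homomorphism `m ↦ m⁻¹ (a • m)`. Its order, the index of the
kernel of that map, is lower semicontinuous in `a`, so by the Baire category theorem it has a local
maximum at some `y`. Near `y` the kernel `K` of `m ↦ m⁻¹ (y • m)` cannot shrink, which forces every
`x` in some open subgroup of `A` to map `M` into `K` and to fix `K` pointwise. Such an `x`
centralises `[M,x]`, so `x ^ |[M,x]|` acts trivially; a prime dividing the order of `x` modulo the
kernel of the action would then lie in both `π(M)` and `π(A)`, so `x` itself acts trivially.
Hence `A` acts through a finite quotient and `[M,A]` is generated by finitely many of the finite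
groups `[M,a]`.
-/

open Filter Topology

theorem mem_primesOf_of_dvd_index {K : Type*} [Group K] [TopologicalSpace K]
    [IsTopologicalGroup K] [CompactSpace K] {N : Subgroup K} [N.Normal]
    (hN : IsOpen (N : Set K)) {p : ℕ} (hp : p.Prime) (hpN : p ∣ N.index) : p ∈ primesOf K :=
  haveI := N.quotient_finite_of_isOpen hN
  ⟨hp, N, inferInstance, hN, Subgroup.index_ne_zero_of_finite, hpN⟩

theorem mem_primesOf_of_orderOf_eq {K : Type*} [Group K] [TopologicalSpace K]
    [IsTopologicalGroup K] [CompactSpace K] [TotallyDisconnectedSpace K]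
    {Z : Subgroup K} [Z.Normal] (hZ : IsClosed (Z : Set K)) {p : ℕ} (hp : p.Prime) {g : K}
    (hg : orderOf (g : K ⧸ Z) = p) : p ∈ primesOf K := by
  have hgZ : g ∉ Z := by
    rw [← QuotientGroup.eq_one_iff, ← orderOf_eq_one_iff, hg]
    exact hp.ne_one
  obtain ⟨N, ⟨hNopen, hZN⟩, hgN⟩ : ∃ N ∈ {N : Subgroup K | IsOpen (N : Set K) ∧ Z ≤ N}, g ∉ N := by
    by_contra! h
    have hZ_eq : Z = sInf {N : Subgroup K | IsOpen (N : Set K) ∧ Z ≤ N} :=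
      ProfiniteGrp.closedSubgroup_eq_sInf_open ⟨Z, hZ⟩
    exact hgZ (hZ_eq ▸ Subgroup.mem_sInf.mpr h)
  have := Subgroup.finiteIndex_iff_finite_quotient.mpr (N.quotient_finite_of_isOpen hNopen)
  have hcore : IsOpen (N.normalCore : Set K) :=
    N.normalCore.isOpen_of_isClosed_of_finiteIndex
      (N.normalCore_isClosed (N.isClosed_of_isOpen hNopen))
  have hZcore : Z ≤ N.normalCore := Subgroup.normal_le_normalCore.mpr hZN
  refine mem_primesOf_of_dvd_index hcore hp ?_
  have hgp : g ^ p ∈ Z := by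
    rw [← QuotientGroup.eq_one_iff, QuotientGroup.mk_pow, ← hg, pow_orderOf_eq_one]
  have : Fact p.Prime := ⟨hp⟩
  have hord : orderOf (g : K ⧸ N.normalCore) = p := by
    refine orderOf_eq_prime ?_ ?_
    · rw [← QuotientGroup.mk_pow, QuotientGroup.eq_one_iff]
      exact hZcore hgp
    · rw [Ne, QuotientGroup.eq_one_iff]
      exact fun h => hgN (N.normalCore_le h)
  exact hord ▸ orderOf_dvd_natCard _

theorem LowerSemicontinuous.exists_isLocalMax {X : Type*} [TopologicalSpace X] [BaireSpace X]
    [Nonempty X] {f : X → ℕ} (hf : LowerSemicontinuous f) : ∃ y, IsLocalMax f y := by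
  obtain ⟨n, hn⟩ := nonempty_interior_of_iUnion_of_closed (f := fun n : ℕ => f ⁻¹' Set.Iic n)
    (fun n => lowerSemicontinuous_iff_isClosed_preimage.mp hf n)
    (Set.eq_univ_of_forall fun x => Set.mem_iUnion.mpr ⟨f x, show f x ≤ f x from le_rfl⟩)
  set V := interior (f ⁻¹' Set.Iic n)
  have hbdd : BddAbove (f '' V) :=
    ⟨n, Set.forall_mem_image.mpr fun x hx => (interior_subset hx : x ∈ f ⁻¹' Set.Iic n)⟩
  obtain ⟨y, hyV, hy⟩ := Nat.sSup_mem (hn.image f) hbdd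
  exact ⟨y, Filter.mem_of_superset (isOpen_interior.mem_nhds hyV)
    fun x hx => hy ▸ le_csSup hbdd ⟨x, hx, rfl⟩⟩

theorem eventually_forall_inv_smul_mul_smul_mem {A M : Type*} [TopologicalSpace A] [Group M]
    [TopologicalSpace M] [IsTopologicalGroup M] [CompactSpace M] [SMul A M] [ContinuousSMul A M]
    (a : A) {U : Set M} (hU : U ∈ 𝓝 1) : ∀ᶠ b in 𝓝 a, ∀ m : M, (a • m)⁻¹ * (b • m) ∈ U := by
  have hcont : Continuous fun z : A × M => (a • z.2)⁻¹ * (z.1 • z.2) :=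
    (continuous_const.smul continuous_snd).inv.mul (continuous_fst.smul continuous_snd)
  have := isCompact_univ.eventually_forall_of_forall_eventually (x₀ := a)
    (P := fun b m => (a • m)⁻¹ * (b • m) ∈ U) fun m _ =>
      hcont.continuousAt (x := (a, m)) (by rwa [inv_mul_cancel])
  exact this.mono fun b hb m => hb m trivial

theorem Subgroup.finite_topologicalClosure_closure {G : Type*} [CommGroup G] [TopologicalSpace G]
    [IsTopologicalGroup G] [T1Space G] {S : Set G} (hS : S.Finite)
    (hS_tors : ∀ g ∈ S, IsOfFinOrder g) : Finite (Subgroup.closure S).topologicalClosure := by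
  have : Finite S := hS.to_subtype
  have hfin : Finite (Subgroup.closure S) := CommGroup.finite_of_fg_isMulTorsion _ fun g =>
    orderOf_pos_iff.mp <| Subgroup.orderOf_coe g ▸ orderOf_pos_iff.mpr <|
      (Subgroup.closure_le (CommGroup.torsion G)).mpr hS_tors g.2
  have hcl : (Subgroup.closure S).topologicalClosure = Subgroup.closure S :=
    le_antisymm ((Subgroup.closure S).topologicalClosure_minimal le_rfl (Set.toFinite _).isClosed)
      (Subgroup.closure S).le_topologicalClosure
  rwa [hcl]

namespace MulDistribMulAction

section Algebra

variable {A M : Type*} [Group A] [CommGroup M] [MulDistribMulAction A M]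

variable (M) in
/-- The homomorphism `m ↦ m⁻¹ (a • m)`, whose range is `[M,a]`. -/
def commHom (a : A) : M →* M where
  toFun m := m⁻¹ * a • m
  map_one' := by simp
  map_mul' m n := by
    simp only [smul_mul', mul_inv]
    exact mul_mul_mul_comm m⁻¹ n⁻¹ (a • m) (a • n)

theorem commHom_apply (a : A) (m : M) : commHom M a m = m⁻¹ * a • m := rfl

theorem commHom_eq_one_iff {a : A} {m : M} : commHom M a m = 1 ↔ a • m = m := by
  rw [commHom_apply, inv_mul_eq_one, eq_comm]

theorem commHom_mul_apply (a b : A) (m : M) :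
    commHom M (a * b) m = commHom M a m * a • commHom M b m := by
  simp only [commHom_apply, smul_mul', smul_inv', mul_smul, mul_assoc, mul_inv_cancel_left]

theorem closure_setOf_eq_range_commHom (a : A) :
    Subgroup.closure {z : M | ∃ m : M, z = m⁻¹ * (a • m)} = (commHom M a).range := by
  rw [← (commHom M a).range.closure_eq]
  congr 1
  ext z
  exact ⟨fun ⟨m, hm⟩ => ⟨m, hm.symm⟩, fun ⟨m, hm⟩ => ⟨m, hm.symm⟩⟩

theorem mem_ker_toMonoidEnd_iff {a : A} : a ∈ (toMonoidEnd A M).ker ↔ ∀ m : M, a • m = m :=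
  MonoidHom.ext_iff

theorem commHom_mul_of_mem_ker (a : A) {b : A} (hb : b ∈ (toMonoidEnd A M).ker) :
    commHom M (a * b) = commHom M a := by
  ext m
  rw [commHom_mul_apply, commHom_eq_one_iff.mpr (mem_ker_toMonoidEnd_iff.mp hb m), smul_one,
    mul_one]

theorem commHom_pow_apply {x : A} (hx : ∀ z ∈ (commHom M x).range, x • z = z) (n : ℕ) (m : M) :
    commHom M (x ^ n) m = commHom M x m ^ n := by
  induction n with
  | zero => simp [commHom_apply]
  | succ n ih =>
    rw [pow_succ', commHom_mul_apply, ih, hx _ (pow_mem (MonoidHom.mem_range.mpr ⟨m, rfl⟩) n),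
      pow_succ']

theorem pow_card_range_commHom_mem_ker {x : A} [Finite (commHom M x).range]
    (hx : ∀ z ∈ (commHom M x).range, x • z = z) :
    x ^ Nat.card (commHom M x).range ∈ (toMonoidEnd A M).ker := by
  refine mem_ker_toMonoidEnd_iff.mpr fun m => commHom_eq_one_iff.mp ?_
  rw [commHom_pow_apply hx]
  exact congrArg Subtype.val
    (pow_card_eq_one' (G := (commHom M x).range) (x := ⟨_, MonoidHom.mem_range.mpr ⟨m, rfl⟩⟩))

theorem smul_eq_of_ker_commHom_le {y x : A} {m : M}
    (hker : (commHom M y).ker ≤ (commHom M (y * x)).ker) (hm : m ∈ (commHom M y).ker) :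
    x • m = m := by
  have := hker hm
  rw [MonoidHom.mem_ker, commHom_mul_apply, MonoidHom.mem_ker.mp hm, one_mul,
    ← smul_one y, smul_left_cancel_iff] at this
  exact commHom_eq_one_iff.mp this

end Algebra

section Topology

variable {A M : Type*} [Group A] [TopologicalSpace A] [CommGroup M] [TopologicalSpace M]
  [IsTopologicalGroup M] [MulDistribMulAction A M] [ContinuousSMul A M]

theorem continuous_commHom (a : A) : Continuous (commHom M a) :=
  continuous_inv.mul (continuous_const_smul a)

theorem isOpen_ker_commHom [T1Space M] (a : A) [Finite (commHom M a).range] :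
    IsOpen ((commHom M a).ker : Set M) :=
  Subgroup.isOpen_of_isClosed_of_finiteIndex _
    (isClosed_singleton.preimage (continuous_commHom a))

theorem isClosed_ker_toMonoidEnd [T1Space M] : IsClosed ((toMonoidEnd A M).ker : Set A) := by
  have hker : ((toMonoidEnd A M).ker : Set A) = ⋂ m : M, {a | a • m = m} := by
    ext a
    simp only [SetLike.mem_coe, mem_ker_toMonoidEnd_iff, Set.mem_iInter, Set.mem_ofPred_eq]
  rw [hker]
  exact isClosed_iInter fun m => isClosed_eq (continuous_id.smul continuous_const) continuous_const

theorem eventually_ker_commHom_le [CompactSpace M] [T1Space M] (a : A)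
    [Finite (commHom M a).range] : ∀ᶠ b in 𝓝 a, (commHom M b).ker ≤ (commHom M a).ker := by
  have hU : (((commHom M a).range : Set M) \ {1})ᶜ ∈ 𝓝 (1 : M) :=
    (Set.toFinite _).sdiff.isClosed.compl_mem_nhds fun h => h.2 rfl
  filter_upwards [eventually_forall_inv_smul_mul_smul_mem a hU] with b hb m hm
  have hsplit : commHom M b m = commHom M a m * ((a • m)⁻¹ * (b • m)) := by
    simp only [commHom_apply, mul_assoc, mul_inv_cancel_left]
  rw [MonoidHom.mem_ker] at hm ⊢
  rw [hm, eq_comm, mul_eq_one_iff_inv_eq] at hsplit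
  by_contra hne
  refine hb m ⟨?_, ?_⟩
  · rw [← hsplit]
    exact inv_mem (MonoidHom.mem_range.mpr ⟨m, rfl⟩)
  · rw [← hsplit]
    exact inv_ne_one.mpr hne

theorem lowerSemicontinuous_index_ker_commHom [CompactSpace M] [T1Space M]
    (hfin : ∀ a : A, Finite (commHom M a).range) :
    LowerSemicontinuous fun a : A => (commHom M a).ker.index := fun a _ hn =>
  (eventually_ker_commHom_le a).mono fun b hb =>
    haveI := hfin b
    hn.trans_le (Subgroup.index_antitone hb)

end Topology

theorem finite_iUnion_range_commHom {A M : Type*} [Group A] [TopologicalSpace A]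
    [IsTopologicalGroup A] [CompactSpace A] [CommGroup M] [MulDistribMulAction A M]
    (hker : IsOpen ((toMonoidEnd A M).ker : Set A)) (hfin : ∀ a : A, Finite (commHom M a).range) :
    (⋃ a : A, ((commHom M a).range : Set M)).Finite := by
  have := (toMonoidEnd A M).ker.quotient_finite_of_isOpen hker
  refine (Set.finite_iUnion fun q : A ⧸ (toMonoidEnd A M).ker =>
    Set.toFinite ((commHom M q.out).range : Set M)).subset (Set.iUnion_subset fun a => ?_)
  obtain ⟨z, hz⟩ := QuotientGroup.mk_out_eq_mul (toMonoidEnd A M).ker a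
  refine Set.subset_iUnion_of_subset (a : A ⧸ (toMonoidEnd A M).ker) ?_
  rw [hz, commHom_mul_of_mem_ker a z.2]

variable {A M : Type*} [Group A] [TopologicalSpace A] [IsTopologicalGroup A] [CompactSpace A]
  [TotallyDisconnectedSpace A] [CommGroup M] [TopologicalSpace M]
  [IsTopologicalGroup M] [CompactSpace M] [T1Space M] [MulDistribMulAction A M]
  [ContinuousSMul A M]

theorem mem_ker_toMonoidEnd_of_forall_smul_eq (hcop : primesOf A ∩ primesOf M = ∅) {x : A}
    [Finite (commHom M x).range] (hx : ∀ z ∈ (commHom M x).range, x • z = z) :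
    x ∈ (toMonoidEnd A M).ker := by
  set n := orderOf (x : A ⧸ (toMonoidEnd A M).ker)
  have hn_dvd : n ∣ Nat.card (commHom M x).range := by
    refine orderOf_dvd_of_pow_eq_one ?_
    rw [← QuotientGroup.mk_pow, QuotientGroup.eq_one_iff]
    exact pow_card_range_commHom_mem_ker hx
  have hn0 : n ≠ 0 := fun h => Nat.card_pos.ne' (Nat.eq_zero_of_zero_dvd (h ▸ hn_dvd))
  by_contra hxZ
  have hn1 : n ≠ 1 := by rwa [Ne, orderOf_eq_one_iff, QuotientGroup.eq_one_iff]
  set p := n.minFac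
  have hp : p.Prime := Nat.minFac_prime hn1
  have hpM : p ∈ primesOf M := by
    refine mem_primesOf_of_dvd_index (isOpen_ker_commHom x) hp ?_
    rw [Subgroup.index_ker]
    exact (Nat.minFac_dvd n).trans hn_dvd
  have hpA : p ∈ primesOf A := by
    refine mem_primesOf_of_orderOf_eq (isClosed_ker_toMonoidEnd (M := M)) hp (g := x ^ (n / p)) ?_
    rw [QuotientGroup.mk_pow]
    exact orderOf_pow_orderOf_div hn0 (Nat.minFac_dvd n)
  exact Set.eq_empty_iff_forall_notMem.mp hcop p ⟨hpA, hpM⟩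

theorem isOpen_ker_toMonoidEnd [T2Space A] (hcop : primesOf A ∩ primesOf M = ∅)
    (hfin : ∀ a : A, Finite (commHom M a).range) : IsOpen ((toMonoidEnd A M).ker : Set A) := by
  obtain ⟨y, hy⟩ := (lowerSemicontinuous_index_ker_commHom hfin).exists_isLocalMax
  have := hfin y
  set K := (commHom M y).ker
  have hK_le : ∀ᶠ a in 𝓝 y, K ≤ (commHom M a).ker := by
    filter_upwards [eventually_ker_commHom_le (M := M) y, hy] with a hle hindex
    have := hfin a
    exact (hle.eq_of_not_lt fun hlt => (Subgroup.index_strictAnti hlt).not_ge hindex).ge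
  have hnear : ∀ᶠ x in 𝓝 (1 : A),
      K ≤ (commHom M (y * x)).ker ∧ ∀ m : M, commHom M x m ∈ K := by
    refine (((continuous_const_mul y).tendsto' 1 y (mul_one y)).eventually hK_le).and ?_
    filter_upwards [eventually_forall_inv_smul_mul_smul_mem (1 : A)
      ((isOpen_ker_commHom (M := M) y).mem_nhds K.one_mem)] with x hx m
    have := hx m
    rwa [one_smul, ← commHom_apply] at this
  obtain ⟨U, hUsub, hUopen, hU1⟩ := mem_nhds_iff.mp hnear
  obtain ⟨H, hH⟩ := ProfiniteGrp.exist_openNormalSubgroup_sub_open_nhds_of_one hUopen hU1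
  refine Subgroup.isOpen_mono (H₁ := H.toSubgroup) (fun x hx => ?_) H.isOpen
  obtain ⟨hker, hrange⟩ := hUsub (hH hx)
  have := hfin x
  refine mem_ker_toMonoidEnd_of_forall_smul_eq hcop fun z hz => ?_
  obtain ⟨m, rfl⟩ := MonoidHom.mem_range.mp hz
  exact smul_eq_of_ker_commHom_le hker (hrange m)

end MulDistribMulAction

open MulDistribMulAction in
theorem commutator_finite_of_pointwise_finite_general
    {A M : Type*} [Group A] [TopologicalSpace A] [IsTopologicalGroup A]
    [CompactSpace A] [T2Space A] [TotallyDisconnectedSpace A]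
    [CommGroup M] [TopologicalSpace M] [IsTopologicalGroup M]
    [CompactSpace M] [T2Space M]
    [MulDistribMulAction A M] [ContinuousSMul A M]
    (hcop : primesOf A ∩ primesOf M = ∅)
    (hfin : ∀ a : A,
      Finite ↥((Subgroup.closure {z : M | ∃ m : M, z = m⁻¹ * (a • m)}).topologicalClosure)) :
    Finite ↥((Subgroup.closure
      {z : M | ∃ (a : A) (m : M), z = m⁻¹ * (a • m)}).topologicalClosure) := by
  have hrange : ∀ a : A, Finite (commHom M a).range := fun a => by
    rw [← closure_setOf_eq_range_commHom]
    exact Finite.of_injective _ (Subgroup.inclusion_injective (Subgroup.le_topologicalClosure _))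
  have hgen : {z : M | ∃ (a : A) (m : M), z = m⁻¹ * (a • m)} =
      ⋃ a : A, ((commHom M a).range : Set M) := by
    ext z
    simp only [Set.mem_ofPred_eq, Set.mem_iUnion, SetLike.mem_coe, MonoidHom.mem_range,
      commHom_apply, eq_comm]
  have htors : ∀ z ∈ ⋃ a : A, ((commHom M a).range : Set M), IsOfFinOrder z := by
    simp only [Set.mem_iUnion]
    rintro _ ⟨a, hz⟩
    have := hrange a
    exact (commHom M a).range.subtype.isOfFinOrder
      (isOfFinOrder_of_finite (⟨_, hz⟩ : (commHom M a).range))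
  rw [hgen]
  exact Subgroup.finite_topologicalClosure_closure
    (finite_iUnion_range_commHom (isOpen_ker_toMonoidEnd hcop hrange) hrange) htors

/-- Let `A` be a profinite group acting continuously by automorphisms on an abelian
profinite group `M`, with `π(A) ∩ π(M) = ∅`. If the closed subgroup `[M,a]` is finite for
every `a ∈ A`, then `[M,A]` is finite. -/
theorem commutator_finite_of_pointwise_finite
    {A M : Type*} [Group A] [TopologicalSpace A] [IsTopologicalGroup A]
    [CompactSpace A] [T2Space A] [TotallyDisconnectedSpace A]
    [CommGroup M] [TopologicalSpace M] [IsTopologicalGroup M]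
    [CompactSpace M] [T2Space M] [TotallyDisconnectedSpace M]
    [MulDistribMulAction A M] [ContinuousSMul A M]
    (hcop : primesOf A ∩ primesOf M = ∅)
    (hfin : ∀ a : A,
      Finite ↥((Subgroup.closure {z : M | ∃ m : M, z = m⁻¹ * (a • m)}).topologicalClosure)) :
    Finite ↥((Subgroup.closure
      {z : M | ∃ (a : A) (m : M), z = m⁻¹ * (a • m)}).topologicalClosure) :=
  commutator_finite_of_pointwise_finite_general hcop hfin
end

section
/- Let G be a profinite group whose set of coprime commutators is contained in a union of countably many procyclic subgroups C₁, C₂, …. If M is a closed subgroup of G every element of which is a coprime commutator of G, then there is an index j such that M ∩ C_j has finite index in M. -/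
/-!  Basic notions for profinite groups.

A profinite group is modelled as a compact Hausdorff totally disconnected
topological group, via the instance assumptions
`[Group G] [TopologicalSpace G] [TopologicalGroup G] [CompactSpace G]
[T2Space G] [TotallyDisconnectedSpace G]`. -/

open scoped commutatorElement

/-! By the Baire category theorem, a compact group covered by countably many closed subgroups
has one of them with nonempty interior; a subgroup with an interior point is open, hence of
finite index. Applied in the compact group `M`, which is covered by the traces `M ∩ C_i` because
every element of `M` is a coprime commutator, this gives the theorem. -/

namespace Subgroup

variable {K ι : Type*} [Group K] [TopologicalSpace K] [IsTopologicalGroup K] [Countable ι]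

theorem exists_isOpen_of_iUnion_eq_univ [BaireSpace K] (H : ι → Subgroup K)
    (hclosed : ∀ i, IsClosed (H i : Set K)) (hcov : ⋃ i, (H i : Set K) = Set.univ) :
    ∃ i, IsOpen (H i : Set K) := by
  obtain ⟨i, g, hg⟩ := nonempty_interior_of_iUnion_of_closed hclosed hcov
  exact ⟨i, (H i).isOpen_of_mem_nhds (mem_interior_iff_mem_nhds.mp hg)⟩

theorem exists_index_ne_zero_of_iUnion_eq_univ [CompactSpace K] (H : ι → Subgroup K)
    (hclosed : ∀ i, IsClosed (H i : Set K)) (hcov : ⋃ i, (H i : Set K) = Set.univ) :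
    ∃ i, (H i).index ≠ 0 := by
  obtain ⟨i, hopen⟩ := exists_isOpen_of_iUnion_eq_univ H hclosed hcov
  have := (H i).quotient_finite_of_isOpen hopen
  exact ⟨i, index_ne_zero_of_finite⟩

end Subgroup

theorem exists_finite_relindex_of_subgroup_of_coprimeCommutators_general
    {G : Type*} [Group G] [TopologicalSpace G] [IsTopologicalGroup G]
    [CompactSpace G]
    (C : ℕ → Subgroup G)
    (hCclosed : ∀ i, IsClosed (C i : Set G))
    (hcov : ∀ g : G, IsCoprimeCommutator g → g ∈ ⋃ i, (C i : Set G))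
    (M : Subgroup G) (hMclosed : IsClosed (M : Set G))
    (hM : ∀ m ∈ M, IsCoprimeCommutator m) :
    ∃ j : ℕ, (C j).relIndex M ≠ 0 := by
  have : CompactSpace M := isCompact_iff_compactSpace.mp hMclosed.isCompact
  have hMcov : ⋃ i, ((C i).subgroupOf M : Set M) = Set.univ := by
    refine Set.eq_univ_of_forall fun m ↦ ?_
    simpa [Subgroup.mem_subgroupOf] using hcov m (hM m m.2)
  exact Subgroup.exists_index_ne_zero_of_iUnion_eq_univ _
    (fun i ↦ (hCclosed i).preimage continuous_subtype_val) hMcov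

/-- Let `G` be a profinite group whose set of coprime commutators is contained in a union
of countably many procyclic closed subgroups `C₀, C₁, …`. If `M` is a closed subgroup of
`G` all of whose elements are coprime commutators of `G`, then there is an index `j` such
that `M ∩ C_j` has finite index in `M`. -/
theorem exists_finite_relindex_of_subgroup_of_coprimeCommutators
    {G : Type*} [Group G] [TopologicalSpace G] [IsTopologicalGroup G]
    [CompactSpace G] [T2Space G] [TotallyDisconnectedSpace G]
    (C : ℕ → Subgroup G)
    (hCclosed : ∀ i, IsClosed (C i : Set G))
    (hCproc : ∀ i, IsProcyclicSubgroup (C i))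
    (hcov : ∀ g : G, IsCoprimeCommutator g → g ∈ ⋃ i, (C i : Set G))
    (M : Subgroup G) (hMclosed : IsClosed (M : Set G))
    (hM : ∀ m ∈ M, IsCoprimeCommutator m) :
    ∃ j : ℕ, (C j).relIndex M ≠ 0 :=
  exists_finite_relindex_of_subgroup_of_coprimeCommutators_general C hCclosed hcov M hMclosed hM
end

section
/- Let X be a normal subset of a profinite group G (a subset invariant under conjugation by all elements of G) and assume that X is contained in a union of countably many procyclic (closed) subgroups of G. Then for every x ∈ X, the normalizer N_G(⟨x⟩) of the closed subgroup topologically generated by x has finite index in G. -/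
/-!  Basic notions for profinite groups.

A profinite group is modelled as a compact Hausdorff totally disconnected
topological group, via the instance assumptions
`[Group G] [TopologicalSpace G] [TopologicalGroup G] [CompactSpace G]
[T2Space G] [TotallyDisconnectedSpace G]`. -/

open scoped commutatorElement

/-! Conjugation `g ↦ g * x * g⁻¹` maps the compact group `G` into `⋃ i, C i`, so by Baire's
theorem some closed preimage contains a coset `g₀ H` of an open subgroup `H`. The closed
subgroup `K = ⋂_{h ∈ H} (g₀ h)⁻¹ (C i) (g₀ h)` contains `x`, is normalized by `H`, and embeds
into the procyclic group `C i` via conjugation by `g₀`. Hence `K` is abelian with cyclic finite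
continuous quotients, so an open subgroup of `K` is determined by its index; every continuous
automorphism of `K` therefore fixes its open subgroups, and with them its closed subgroups,
which are intersections of open ones. Applied to conjugation by `h ∈ H` and the closed subgroup
`⟨x⟩ ≤ K`, this puts the open subgroup `H` inside `N_G(⟨x⟩)`. -/

open Subgroup

def HasCyclicOpenQuotients (P : Type*) [Group P] [TopologicalSpace P] : Prop :=
  ∀ (N : Subgroup P) [N.Normal], IsOpen (N : Set P) → IsCyclic (P ⧸ N)

theorem Subgroup.le_of_card_eq_of_isCyclic {Q : Type*} [Group Q] [Finite Q] [IsCyclic Q]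
    {A B : Subgroup Q} (h : Nat.card A = Nat.card B) : A ≤ B := by
  classical
  cases nonempty_fintype Q
  have hsub (C : Subgroup Q) :
      (C : Set Q).toFinset ⊆ ({q | q ^ Nat.card C = 1} : Finset Q) := fun q hq => by
    simpa [orderOf_dvd_iff_pow_eq_one] using
      Subgroup.orderOf_dvd_natCard C (Set.mem_toFinset.mp hq)
  have hB : (B : Set Q).toFinset = ({q | q ^ Nat.card B = 1} : Finset Q) :=
    Finset.eq_of_subset_of_card_le (hsub B) <| by
      rw [Set.toFinset_card, ← Nat.card_eq_fintype_card]
      exact IsCyclic.card_pow_eq_one_le Nat.card_pos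
  intro q hq
  have hqB := hsub A (Set.mem_toFinset.mpr hq)
  rwa [h, ← hB, Set.mem_toFinset] at hqB

theorem Subgroup.eq_of_index_eq_of_isCyclic {Q : Type*} [Group Q] [Finite Q] [IsCyclic Q]
    {A B : Subgroup Q} (h : A.index = B.index) : A = B := by
  have hcard : Nat.card A = Nat.card B := by
    refine Nat.eq_of_mul_eq_mul_right (Nat.pos_of_ne_zero (index_ne_zero_of_finite (H := B))) ?_
    rw [card_mul_index, ← h, card_mul_index]
  exact le_antisymm (le_of_card_eq_of_isCyclic hcard) (le_of_card_eq_of_isCyclic hcard.symm)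

namespace HasCyclicOpenQuotients

theorem of_isInducing {K P : Type*} [Group K] [TopologicalSpace K]
    [Group P] [TopologicalSpace P] [IsTopologicalGroup P] [CompactSpace P]
    [TotallyDisconnectedSpace P] (hP : HasCyclicOpenQuotients P) (f : K →* P)
    (hf : Topology.IsInducing f) : HasCyclicOpenQuotients K := by
  intro N _ hN
  obtain ⟨V, hV, hVN⟩ := hf.isOpen_iff.mp hN
  have h1V : (1 : P) ∈ V := by
    rw [← map_one f, ← Set.mem_preimage, hVN]
    exact N.one_mem
  obtain ⟨W, hWV⟩ := ProfiniteGrp.exist_openNormalSubgroup_sub_open_nhds_of_one hV h1V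
  have := hP W.toSubgroup W.isOpen
  let g := (QuotientGroup.mk' W.toSubgroup).comp f
  have hker : g.ker ≤ N := fun k hk => by
    rw [← SetLike.mem_coe, ← hVN]
    exact hWV (show f k ∈ W.toSubgroup by simpa [g] using hk)
  have : IsCyclic (K ⧸ g.ker) :=
    isCyclic_of_surjective _ (QuotientGroup.quotientKerEquivRange g).symm.surjective
  exact isCyclic_of_surjective _ <| QuotientGroup.lift_surjective_of_surjective _
    (QuotientGroup.mk' N) (QuotientGroup.mk'_surjective N) (by simpa using hker)

section Commutative

variable {P : Type*} [Group P] [IsMulCommutative P] [TopologicalSpace P] [IsTopologicalGroup P]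
  [CompactSpace P]

theorem eq_of_index_eq (hP : HasCyclicOpenQuotients P) {U V : Subgroup P}
    (hU : IsOpen (U : Set P)) (hV : IsOpen (V : Set P)) (h : U.index = V.index) : U = V := by
  have hN : IsOpen ((U ⊓ V : Subgroup P) : Set P) := hU.inter hV
  have := quotient_finite_of_isOpen _ hN
  have := hP _ hN
  let π := QuotientGroup.mk' (U ⊓ V)
  have hπ := QuotientGroup.mk'_surjective (U ⊓ V)
  have hU' : π.ker ≤ U := by simp [π]
  have hV' : π.ker ≤ V := by simp [π]
  have hmap : U.map π = V.map π :=
    eq_of_index_eq_of_isCyclic (by rwa [index_map_eq _ hπ hU', index_map_eq _ hπ hV'])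
  rw [← comap_map_eq_self hU', hmap, comap_map_eq_self hV']

theorem comap_eq_of_isOpen (hP : HasCyclicOpenQuotients P) {e : P →* P} (he : Continuous e)
    (he' : Function.Surjective e) {U : Subgroup P} (hU : IsOpen (U : Set P)) : U.comap e = U :=
  hP.eq_of_index_eq (hU.preimage he) hU (U.index_comap_of_surjective he')

theorem map_mem_of_isClosed [TotallyDisconnectedSpace P] (hP : HasCyclicOpenQuotients P)
    {e : P →* P} (he : Continuous e) (he' : Function.Surjective e) {D : Subgroup P}
    (hD : IsClosed (D : Set P)) {y : P} (hy : y ∈ D) : e y ∈ D := by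
  have hDeq : D = sInf {U : Subgroup P | IsOpen (U : Set P) ∧ D ≤ U} :=
    ProfiniteGrp.closedSubgroup_eq_sInf_open ⟨D, hD⟩
  rw [hDeq, mem_sInf] at hy ⊢
  intro U hU
  have hyU := hy U hU
  rwa [← hP.comap_eq_of_isOpen he he' hU.1] at hyU

end Commutative

end HasCyclicOpenQuotients

section Procyclic

variable {G : Type*} [Group G] [TopologicalSpace G] [IsTopologicalGroup G] {C : Subgroup G}

theorem IsProcyclicSubgroup.hasCyclicOpenQuotients (hC : IsProcyclicSubgroup C) :
    HasCyclicOpenQuotients C := by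
  obtain ⟨c, hcC, hc⟩ := hC
  intro N _ hN
  have := QuotientGroup.discreteTopology hN
  have hdense : DenseRange fun n : ℤ => (⟨c, hcC⟩ : C) ^ n := by
    have himage : Subtype.val '' (zpowers (⟨c, hcC⟩ : C) : Set C) = zpowers c :=
      congrArg SetLike.coe (MonoidHom.map_zpowers C.subtype ⟨c, hcC⟩)
    rw [DenseRange, ← coe_zpowers, Topology.IsInducing.subtypeVal.dense_iff]
    intro x
    convert x.2
    exact (congrArg _root_.closure himage).trans hc
  have hsurj := denseRange_discrete.mp
    ((QuotientGroup.mk_surjective (s := N)).denseRange.comp hdense continuous_quot_mk)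
  exact ⟨⟨QuotientGroup.mk ⟨c, hcC⟩, by simpa [Function.comp_def] using hsurj⟩⟩

theorem IsProcyclicSubgroup.isMulCommutative [T2Space G] (hC : IsProcyclicSubgroup C) :
    IsMulCommutative C := by
  obtain ⟨c, -, hc⟩ := hC
  obtain rfl : (zpowers c).topologicalClosure = C :=
    SetLike.coe_injective (by rw [topologicalClosure_coe, hc])
  let _ := (zpowers c).commGroupTopologicalClosure fun a b => mul_comm' a b
  exact ⟨⟨mul_comm⟩⟩

end Procyclic

section Profinite

variable {G : Type*} [Group G] [TopologicalSpace G] [IsTopologicalGroup G] [CompactSpace G]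
  [TotallyDisconnectedSpace G]

theorem HasCyclicOpenQuotients.normalizer_le_normalizer {K D : Subgroup G}
    (hK : IsClosed (K : Set G)) [IsMulCommutative K] (hKcyc : HasCyclicOpenQuotients K)
    (hD : IsClosed (D : Set G)) (hDK : D ≤ K) :
    normalizer (K : Set G) ≤ normalizer (D : Set G) := by
  have : CompactSpace K := isCompact_iff_compactSpace.mp hK.isCompact
  refine le_normalizer_iff.mpr fun g hg d hd => ?_
  let e : K →* K := ((MulAut.conj g).toMonoidHom.comp K.subtype).codRestrict K
    fun k => (mem_normalizer_iff.mp hg k).mp k.2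
  have he : Continuous e := by
    refine Continuous.subtype_mk ?_ _
    change Continuous fun k : K => g * k * g⁻¹
    fun_prop
  have he' : Function.Surjective e := fun k =>
    ⟨⟨g⁻¹ * k * g, by simpa using (mem_normalizer_iff.mp (inv_mem hg) k).mp k.2⟩,
      Subtype.ext (by simp [e]; group)⟩
  exact hKcyc.map_mem_of_isClosed he he' (D := D.subgroupOf K)
    (hD.preimage continuous_subtype_val) (y := ⟨d, hDK hd⟩) hd

theorem exists_open_subgroup_mul_mem_of_iUnion_eq_univ [T2Space G] {ι : Type*} [Countable ι]
    {F : ι → Set G} (hF : ∀ i, IsClosed (F i)) (hcov : ⋃ i, F i = Set.univ) :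
    ∃ i, ∃ g : G, ∃ H : Subgroup G, IsOpen (H : Set G) ∧ ∀ h ∈ H, g * h ∈ F i := by
  obtain ⟨i, g, hg⟩ := nonempty_interior_of_iUnion_of_closed hF hcov
  obtain ⟨H, hH⟩ := ProfiniteGrp.exist_openNormalSubgroup_sub_open_nhds_of_one
    (isOpen_interior.preimage (continuous_const_mul g)) (by simpa using hg)
  exact ⟨i, g, H.toSubgroup, H.isOpen, fun h hh => interior_subset (hH hh)⟩

theorem le_normalizer_closedGen_of_conj_mem [T2Space G] {C H : Subgroup G}
    (hC : IsClosed (C : Set G)) (hCproc : IsProcyclicSubgroup C) {g₀ x : G}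
    (hx : ∀ h ∈ H, (g₀ * h) * x * (g₀ * h)⁻¹ ∈ C) :
    H ≤ normalizer (closedGen x : Set G) := by
  let K : Subgroup G := ⨅ h : H, C.comap (MulAut.conj (g₀ * h)).toMonoidHom
  have hxK : x ∈ K := mem_iInf.mpr fun h => hx h h.2
  have hK : IsClosed (K : Set G) := by
    rw [coe_iInf]
    exact isClosed_iInter fun h => hC.preimage (by
      change Continuous fun y => (g₀ * h) * y * (g₀ * h)⁻¹
      fun_prop)
  have hHK : H ≤ normalizer (K : Set G) := le_normalizer_iff.mpr fun h₀ hh₀ k hk =>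
    mem_iInf.mpr fun h => by
      simpa [mul_assoc] using mem_iInf.mp hk ⟨h * h₀, mul_mem h.2 hh₀⟩
  let φ : K →* C := ((MulAut.conj g₀).toMonoidHom.comp K.subtype).codRestrict C
    fun k => by simpa using mem_iInf.mp k.2 1
  have hφ : Function.Injective φ := fun a b hab => by simpa [φ] using hab
  have : CompactSpace K := isCompact_iff_compactSpace.mp hK.isCompact
  have : CompactSpace C := isCompact_iff_compactSpace.mp hC.isCompact
  have : IsMulCommutative C := hCproc.isMulCommutative
  have : IsMulCommutative K := ⟨⟨fun a b => hφ (by simp only [map_mul]; exact mul_comm' _ _)⟩⟩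
  have hφc : Continuous φ := by
    refine Continuous.subtype_mk ?_ _
    change Continuous fun k : K => g₀ * k * g₀⁻¹
    fun_prop
  have hKcyc :=
    hCproc.hasCyclicOpenQuotients.of_isInducing φ (hφc.isClosedEmbedding hφ).isInducing
  exact hHK.trans <| hKcyc.normalizer_le_normalizer hK (isClosed_topologicalClosure _)
    (topologicalClosure_minimal _ (zpowers_le.mpr hxK) hK)

end Profinite

/-- Let `X` be a normal subset of a profinite group `G` contained in a union of countably
many procyclic closed subgroups. Then for every `x ∈ X` the normalizer `N_G(⟨x⟩)` of the
closed subgroup topologically generated by `x` has finite index in `G`. -/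
theorem normalizer_finite_index_of_normal_subset_covered
    {G : Type*} [Group G] [TopologicalSpace G] [IsTopologicalGroup G]
    [CompactSpace G] [T2Space G] [TotallyDisconnectedSpace G]
    (X : Set G) (hXnormal : ∀ g : G, ∀ x ∈ X, g * x * g⁻¹ ∈ X)
    (C : ℕ → Subgroup G)
    (hCclosed : ∀ i, IsClosed (C i : Set G))
    (hCproc : ∀ i, IsProcyclicSubgroup (C i))
    (hcov : X ⊆ ⋃ i, (C i : Set G)) :
    ∀ x ∈ X, (Subgroup.normalizer (closedGen x : Set G)).index ≠ 0 := by
  intro x hx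
  obtain ⟨i, g₀, H, hHopen, hH⟩ := exists_open_subgroup_mul_mem_of_iUnion_eq_univ
    (F := fun i => (fun g => g * x * g⁻¹) ⁻¹' (C i : Set G))
    (fun i => (hCclosed i).preimage (by fun_prop))
    (Set.eq_univ_of_forall fun g => by simpa using hcov (hXnormal g x hx))
  have hHN := le_normalizer_closedGen_of_conj_mem (hCclosed i) (hCproc i) hH
  have := quotient_finite_of_isOpen _ (isOpen_mono hHN hHopen)
  exact index_ne_zero_of_finite
end
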